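/- arXiv:1801.08596 — 5 statements merged into one kernel-verified Lean document; each statement's English description precedes it below -/
import Mathlib

section
/- Let q ≥ 1 be an integer, let r ∈ {0,…,q−1} be coprime to q (r = 0 if q = 1), let r° ∈ {0,…,q−1} satisfy r·r° ≡ 1 (mod q) (r° = 0 if q = 1), and let α be a nonzero real number. Then for every ξ ∈ ℝ and τ ∈ ℤ, the following are equivalent: (i) for all n ∈ ℤ, exp(2πi(αnξ + rnτ/q)) = 1; (ii) there exists m ∈ ℤ with ξ = m/(αq) and τ ≡ −r°·m (mod q). -/
open MeasureTheory Complex Real Filter Finset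

noncomputable section

/-- Short-time Fourier transform of `u` with respect to the Gaussian window
`t ↦ exp(-π t²)`, evaluated at time `x` and frequency `ω`. -/
def stft (u : ℝ → ℂ) (x ω : ℝ) : ℂ :=
  ∫ t : ℝ, u t * Complex.exp (-(2 * (Real.pi : ℂ) * Complex.I * (t : ℂ) * (ω : ℂ))) *
    Complex.exp (-((Real.pi : ℂ) * ((t : ℂ) - (x : ℂ)) ^ 2))

/-- Integrand of the `M¹_s(ℝ)` norm. -/
def m1Integrand (s : ℝ) (u : ℝ → ℂ) (p : ℝ × ℝ) : ℝ :=
  ‖stft u p.1 p.2‖ * (1 + |p.1| + |p.2|) ^ s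

/-- Membership in the modulation space `M¹_s(ℝ)`. -/
def MemM1 (s : ℝ) (u : ℝ → ℂ) : Prop :=
  MemLp u 2 volume ∧ Integrable (m1Integrand s u)

/-- The `M¹_s(ℝ)` norm. -/
def m1Norm (s : ℝ) (u : ℝ → ℂ) : ℝ := ∫ p : ℝ × ℝ, m1Integrand s u p

/-- Inner product on `L²(ℝ×ℤ_q)`. -/
def ipq (q : ℕ) [NeZero q] (f g : ℝ × ZMod q → ℂ) : ℂ :=
  ∑ k : ZMod q, ∫ x : ℝ, f (x, k) * (starRingEnd ℂ) (g (x, k))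

/-- Squared norm on `L²(ℝ×ℤ_q)`. -/
def norm2q (q : ℕ) [NeZero q] (f : ℝ × ZMod q → ℂ) : ℝ :=
  ∑ k : ZMod q, ∫ x : ℝ, ‖f (x, k)‖ ^ 2

/-- Membership in `L²(ℝ×ℤ_q)`. -/
def MemL2q (q : ℕ) [NeZero q] (f : ℝ × ZMod q → ℂ) : Prop :=
  ∀ k : ZMod q, MemLp (fun x : ℝ => f (x, k)) 2 volume

/-- Membership in `M¹_s(ℝ×ℤ_q)`: every slice lies in `M¹_s(ℝ)` (and in `L²`). -/
def MemM1q (q : ℕ) [NeZero q] (s : ℝ) (f : ℝ × ZMod q → ℂ) : Prop :=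
  ∀ k : ZMod q, MemM1 s (fun x : ℝ => f (x, k))

/-- The `M¹_s(ℝ×ℤ_q)` norm: sum of slice norms. -/
def m1qNorm (q : ℕ) [NeZero q] (s : ℝ) (f : ℝ × ZMod q → ℂ) : ℝ :=
  ∑ k : ZMod q, m1Norm s (fun x : ℝ => f (x, k))

/-- Translation `T_{λ,l}` on `ℝ×ℤ_q`. -/
def Tsh (q : ℕ) (lam : ℝ) (l : ZMod q) (f : ℝ × ZMod q → ℂ) : ℝ × ZMod q → ℂ :=
  fun p => f (p.1 - lam, p.2 - l)

/-- The character `a ↦ e^{2πi a/q}` of `ℤ_q`. -/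
def zchar (q : ℕ) [NeZero q] (a : ZMod q) : ℂ :=
  Complex.exp (2 * (Real.pi : ℂ) * Complex.I * (a.val : ℂ) / (q : ℂ))

/-- Modulation `E_{γ,c}` on `ℝ×ℤ_q`:  `(E_{γ,c}f)(x,j) = e^{2πi(xγ + jc/q)} f(x,j)`. -/
def Msh (q : ℕ) [NeZero q] (gam : ℝ) (c : ZMod q) (f : ℝ × ZMod q → ℂ) : ℝ × ZMod q → ℂ :=
  fun p => Complex.exp (2 * (Real.pi : ℂ) * Complex.I * (p.1 : ℂ) * (gam : ℂ)) *
    zchar q (p.2 * c) * f p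

/-- The time-frequency shift `π_{n,m} = E_{βm, sm} T_{αn, rn}`. -/
def gpi (q : ℕ) [NeZero q] (α β : ℝ) (r s : ℕ) (nm : ℤ × ℤ) (f : ℝ × ZMod q → ℂ) :
    ℝ × ZMod q → ℂ :=
  Msh q (β * nm.2) ((s : ZMod q) * (nm.2 : ZMod q))
    (Tsh q (α * nm.1) ((r : ZMod q) * (nm.1 : ZMod q)) f)

/-- The adjoint frequency-time shift `π°_{n,m} = T_{n/(βq), -s°n} E_{m/(αq), -r°m}`. -/
def gpio (q : ℕ) [NeZero q] (α β : ℝ) (rc sc : ℕ) (nm : ℤ × ℤ) (f : ℝ × ZMod q → ℂ) :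
    ℝ × ZMod q → ℂ :=
  Tsh q ((nm.1 : ℝ) / (β * q)) (-((sc : ZMod q) * (nm.1 : ZMod q)))
    (Msh q ((nm.2 : ℝ) / (α * q)) (-((rc : ZMod q) * (nm.2 : ZMod q))) f)

/-- `g` generates a Gabor frame for `L²(ℝ×ℤ_q)` w.r.t. the shifts `π_{n,m}`. -/
def IsGaborFrame (q : ℕ) [NeZero q] (α β : ℝ) (r s : ℕ) (g : ℝ × ZMod q → ℂ) : Prop :=
  ∃ A B : ℝ, 0 < A ∧ 0 < B ∧ ∀ f : ℝ × ZMod q → ℂ, MemL2q q f →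
    Summable (fun nm : ℤ × ℤ => ‖ipq q f (gpi q α β r s nm g)‖ ^ 2) ∧
    A * norm2q q f ≤ ∑' nm : ℤ × ℤ, ‖ipq q f (gpi q α β r s nm g)‖ ^ 2 ∧
    ∑' nm : ℤ × ℤ, ‖ipq q f (gpi q α β r s nm g)‖ ^ 2 ≤ B * norm2q q f

/-- Weak characterization of `S_g h = f`, where `S_g` is the Gabor frame operator of `g`:
for every `u ∈ L²`, `∑_{n,m} ⟨h, π_{n,m}g⟩⟨π_{n,m}g, u⟩ = ⟨f, u⟩`.  In particular, for a
Gabor frame generator `g`, `SgApplyEq g h f` holds iff `h = S_g⁻¹ f`. -/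
def SgApplyEq (q : ℕ) [NeZero q] (α β : ℝ) (r s : ℕ) (g h f : ℝ × ZMod q → ℂ) : Prop :=
  ∀ u : ℝ × ZMod q → ℂ, MemL2q q u →
    Summable (fun nm : ℤ × ℤ => ipq q h (gpi q α β r s nm g) * ipq q (gpi q α β r s nm g) u) ∧
    ∑' nm : ℤ × ℤ, ipq q h (gpi q α β r s nm g) * ipq q (gpi q α β r s nm g) u = ipq q f u

/-- `g` and `h` are a dual pair of Gabor frame generators:
`f = ∑_{n,m} ⟨f, π_{n,m}g⟩ π_{n,m}h` for all `f ∈ L²`, with unconditional `L²` convergence. -/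
def IsDualPair (q : ℕ) [NeZero q] (α β : ℝ) (r s : ℕ) (g h : ℝ × ZMod q → ℂ) : Prop :=
  ∀ f : ℝ × ZMod q → ℂ, MemL2q q f →
    Filter.Tendsto (fun F : Finset (ℤ × ℤ) =>
      norm2q q (fun p => f p - ∑ nm ∈ F, ipq q f (gpi q α β r s nm g) * gpi q α β r s nm h p))
      Filter.atTop (nhds 0)

/-- Slice-wise a.e. equality (equality in `L²(ℝ×ℤ_q)`). -/
def AeEqq (q : ℕ) [NeZero q] (f g : ℝ × ZMod q → ℂ) : Prop :=
  ∀ k : ZMod q, (fun x : ℝ => f (x, k)) =ᵐ[volume] (fun x : ℝ => g (x, k))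

/-- The 2-cocycle factor `e^{-2πi(α x₁ · β y₂ + r x₁ · s y₂ / q)}`. -/
def twFac (q : ℕ) (α β : ℝ) (r s : ℕ) (x y : ℤ × ℤ) : ℂ :=
  Complex.exp (-(2 * (Real.pi : ℂ) * Complex.I) *
    ((α * x.1 * (β * y.2) + (r * x.1) * (s * y.2) / q : ℝ) : ℂ))

/-- Twisted convolution of sequences on `ℤ²` (indexing the lattice `Λ×Γ`). -/
def twConv (q : ℕ) (α β : ℝ) (r s : ℕ) (a b : ℤ × ℤ → ℂ) (nm : ℤ × ℤ) : ℂ :=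
  ∑' x : ℤ × ℤ, a x * b (nm - x) * twFac q α β r s x (nm - x)

/-- The derivation `∂₁`. -/
def td1 (α : ℝ) (a : ℤ × ℤ → ℂ) : ℤ × ℤ → ℂ :=
  fun nm => 2 * (Real.pi : ℂ) * Complex.I * ((α * nm.1 : ℝ) : ℂ) * a nm

/-- The derivation `∂₂`. -/
def td2 (β : ℝ) (a : ℤ × ℤ → ℂ) : ℤ × ℤ → ℂ :=
  fun nm => 2 * (Real.pi : ℂ) * Complex.I * ((β * nm.2 : ℝ) : ℂ) * a nm

/-- The covariant derivative `∇₁ f (x,k) = 2πi x f(x,k)`. -/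
def covd1 (q : ℕ) (f : ℝ × ZMod q → ℂ) : ℝ × ZMod q → ℂ :=
  fun p => 2 * (Real.pi : ℂ) * Complex.I * (p.1 : ℂ) * f p

/-- 1D Gabor atom `E_b T_a g`. -/
def gabor1 (a b : ℝ) (g : ℝ → ℂ) : ℝ → ℂ :=
  fun t => Complex.exp (2 * (Real.pi : ℂ) * Complex.I * (b : ℂ) * (t : ℂ)) * g (t - a)

/-- Inner product on `L²(ℝ)`. -/
def ip1 (f g : ℝ → ℂ) : ℂ := ∫ t : ℝ, f t * (starRingEnd ℂ) (g t)

/-- Squared norm on `L²(ℝ)`. -/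
def norm2R (f : ℝ → ℂ) : ℝ := ∫ t : ℝ, ‖f t‖ ^ 2

/-- Integrand of the continuous twisted convolution. -/
def ctwInt (q : ℕ) [NeZero q] (K₁ K₂ : ℝ × ZMod q × ℝ × ZMod q → ℂ)
    (v : ℝ × ZMod q × ℝ × ZMod q) (l' c' : ZMod q) (w : ℝ × ℝ) : ℂ :=
  K₁ (w.1, l', w.2, c') * K₂ (v.1 - w.1, v.2.1 - l', v.2.2.1 - w.2, v.2.2.2 - c') *
    Complex.exp (-(2 * (Real.pi : ℂ) * Complex.I) * ((w.1 * (v.2.2.1 - w.2) : ℝ) : ℂ)) *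
    (starRingEnd ℂ) (zchar q (l' * (v.2.2.2 - c')))

/-- Continuous twisted convolution on `ℝ×ℤ_q×ℝ̂×ℤ̂_q`. -/
def ctwC (q : ℕ) [NeZero q] (K₁ K₂ : ℝ × ZMod q × ℝ × ZMod q → ℂ)
    (v : ℝ × ZMod q × ℝ × ZMod q) : ℂ :=
  ∑ l' : ZMod q, ∑ c' : ZMod q, ∫ w : ℝ × ℝ, ctwInt q K₁ K₂ v l' c' w

/-- The derivation `∂₁` of the Moyal plane algebra. -/
def cd1 (q : ℕ) (K : ℝ × ZMod q × ℝ × ZMod q → ℂ) : ℝ × ZMod q × ℝ × ZMod q → ℂ :=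
  fun v => 2 * (Real.pi : ℂ) * Complex.I * (v.1 : ℂ) * K v

/-- The derivation `∂₂` of the Moyal plane algebra. -/
def cd2 (q : ℕ) (K : ℝ × ZMod q × ℝ × ZMod q → ℂ) : ℝ × ZMod q × ℝ × ZMod q → ℂ :=
  fun v => 2 * (Real.pi : ℂ) * Complex.I * (v.2.2.1 : ℂ) * K v

lemma exp_two_pi_eq_one_iff (x : ℝ) :
    Complex.exp (2 * (Real.pi : ℂ) * Complex.I * (x : ℂ)) = 1 ↔ ∃ k : ℤ, x = k := by
  rw [Complex.exp_eq_one_iff]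
  constructor
  · rintro ⟨n, hn⟩
    refine ⟨n, ?_⟩
    have h2 : (2 * (Real.pi : ℂ) * Complex.I) ≠ 0 := by
      exact mul_ne_zero (mul_ne_zero two_ne_zero
        (Complex.ofReal_ne_zero.mpr Real.pi_ne_zero)) Complex.I_ne_zero
    have : (x : ℂ) = (n : ℂ) :=
      mul_left_cancel₀ h2 (by rw [hn]; ring)
    exact_mod_cast this
  · rintro ⟨k, hk⟩
    exact ⟨k, by rw [hk]; push_cast; ring⟩

/-- description of the annihilator of the lattice
`Λ = {(αn, rn mod q) : n ∈ ℤ}` in `ℝ×ℤ_q`. -/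
theorem statement2 (q : ℕ) (hq : 1 ≤ q) (r rc : ℕ) (hr : r < q) (hrc : rc < q)
    (hrq : Nat.Coprime r q) (hrrc : (r * rc) % q = 1 % q)
    (hq1 : q = 1 → r = 0 ∧ rc = 0)
    (α : ℝ) (hα : α ≠ 0) (ξ : ℝ) (τ : ℤ) :
    (∀ n : ℤ,
        Complex.exp (2 * (Real.pi : ℂ) * Complex.I *
          ((α * n * ξ + (r : ℝ) * n * (τ : ℝ) / q : ℝ) : ℂ)) = 1) ↔
      (∃ m : ℤ, ξ = (m : ℝ) / (α * q) ∧ (τ : ZMod q) = -((rc : ZMod q) * (m : ZMod q))) := by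

  have hq0 : (q : ℝ) ≠ 0 := Nat.cast_ne_zero.mpr (by omega)
  have hrrcZ : ((r : ZMod q) * (rc : ZMod q)) = 1 := by
    have : ((r * rc : ℕ) : ZMod q) = ((1 : ℕ) : ZMod q) :=
      (ZMod.natCast_eq_natCast_iff _ _ _).mpr hrrc
    push_cast at this
    exact this
  constructor
  · intro h
    have h1 := (exp_two_pi_eq_one_iff _).mp (h 1)
    rcases h1 with ⟨k, hk⟩
    push_cast at hk
    refine ⟨k * q - r * τ, ?_, ?_⟩
    · have : α * q * ξ = ((k * q - r * τ : ℤ) : ℝ) := by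
        push_cast
        field_simp at hk ⊢
        linarith
      field_simp [hα, hq0] at this ⊢
      linarith
    · push_cast [ZMod.natCast_self]
      linear_combination (-(τ : ZMod q)) * hrrcZ
  · rintro ⟨m, hξ, hτ⟩ n
    rw [exp_two_pi_eq_one_iff]
    have hdvd : (q : ℤ) ∣ (m + r * τ) := by
      have : ((m + r * τ : ℤ) : ZMod q) = 0 := by
        push_cast
        rw [hτ]
        linear_combination (-(m : ZMod q)) * hrrcZ
      exact (ZMod.intCast_zmod_eq_zero_iff_dvd _ _).mp this
    rcases hdvd with ⟨j, hj⟩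
    refine ⟨n * j, ?_⟩
    have hαq : α * q ≠ 0 := mul_ne_zero hα hq0
    rw [hξ]
    have hjr : (m : ℝ) + r * τ = q * j := by exact_mod_cast congrArg (Int.cast : ℤ → ℝ) hj
    push_cast
    field_simp
    linear_combination (n : ℝ) * hjr


end
end

section
/- Assume the parameters satisfy 1/(αβq²) + r°s°/q ∈ ℤ. Let g̃ ∈ M¹_0(ℝ) be such that the Gabor system {E_{mβq}T_{nα} g̃}_{(n,m)∈ℤ²} is a frame for L²(ℝ), i.e. there exist A,B > 0 with A‖f‖² ≤ ∑_{(n,m)∈ℤ²} |⟨f, E_{mβq}T_{nα} g̃⟩|² ≤ B‖f‖² for all f ∈ L²(ℝ). Then the function g ∈ M¹_0(ℝ×ℤ_q) defined by g(x,k) = g̃(x) for all k generates a Gabor frame for L²(ℝ×ℤ_q) with respect to {π_{n,m}}_{(n,m)∈ℤ²}. -/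
open MeasureTheory Complex Real Filter Finset

noncomputable section

/-! ### Auxiliary lemmas about `zchar` -/

section AuxZChar

variable (q : ℕ) [NeZero q]

lemma zchar_eq_pow (a : ZMod q) :
    zchar q a = Complex.exp (2 * (Real.pi : ℂ) * Complex.I / q) ^ a.val := by
  rw [zchar, ← Complex.exp_nat_mul]
  congr 1
  ring

lemma zeta_pow_q :
    Complex.exp (2 * (Real.pi : ℂ) * Complex.I / q) ^ q = 1 := by
  rw [← Complex.exp_nat_mul]
  have hq : (q : ℂ) ≠ 0 := Nat.cast_ne_zero.mpr (NeZero.ne q)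
  rw [show (q : ℂ) * (2 * (Real.pi : ℂ) * Complex.I / q) = 2 * Real.pi * Complex.I by
    rw [mul_comm, div_mul_cancel₀ _ hq]]
  exact Complex.exp_two_pi_mul_I

lemma zchar_add (a b : ZMod q) : zchar q (a + b) = zchar q a * zchar q b := by
  simp only [zchar_eq_pow]
  rw [ZMod.val_add, ← pow_eq_pow_mod _ (zeta_pow_q q), pow_add]

lemma zchar_abs (a : ZMod q) : ‖zchar q a‖ = 1 := by
  rw [zchar, show 2 * (Real.pi : ℂ) * Complex.I * (a.val : ℂ) / q
      = ((2 * Real.pi * a.val / q : ℝ) : ℂ) * Complex.I by push_cast; ring,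
    Complex.norm_exp_ofReal_mul_I]

lemma conj_zchar_mul (a b : ZMod q) :
    (starRingEnd ℂ) (zchar q a) * zchar q b = zchar q (b - a) := by
  have h1 : zchar q (b - a) * zchar q a = zchar q b := by
    rw [← zchar_add]; congr 1; ring
  have h2 : (starRingEnd ℂ) (zchar q a) * zchar q a = 1 := by
    rw [mul_comm, Complex.mul_conj, ← Complex.sq_norm, zchar_abs]
    norm_num
  calc (starRingEnd ℂ) (zchar q a) * zchar q b
      = zchar q (b - a) * ((starRingEnd ℂ) (zchar q a) * zchar q a) := by rw [← h1]; ring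
    _ = zchar q (b - a) := by rw [h2, mul_one]

lemma zchar_sum (d : ZMod q) :
    ∑ j : ZMod q, zchar q (d * j) = if d = 0 then (q : ℂ) else 0 := by
  have hζ := Complex.isPrimitiveRoot_exp q (NeZero.ne q)
  have hstep : ∀ j : ZMod q, zchar q (d * j)
      = (Complex.exp (2 * (Real.pi : ℂ) * Complex.I / q) ^ d.val) ^ j.val := fun j => by
    rw [zchar_eq_pow, ZMod.val_mul, ← pow_eq_pow_mod _ (zeta_pow_q q), pow_mul]
  have hbij : ∑ j : ZMod q, (Complex.exp (2 * (Real.pi : ℂ) * Complex.I / q) ^ d.val) ^ j.val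
      = ∑ v ∈ Finset.range q, (Complex.exp (2 * (Real.pi : ℂ) * Complex.I / q) ^ d.val) ^ v := by
    refine Finset.sum_nbij' (fun j => j.val) (fun v => (v : ZMod q)) ?_ ?_ ?_ ?_ ?_
    · intro a _; exact Finset.mem_range.mpr (ZMod.val_lt a)
    · intro a _; exact Finset.mem_univ _
    · intro a _; exact ZMod.natCast_rightInverse a
    · intro a ha; exact ZMod.val_cast_of_lt (Finset.mem_range.mp ha)
    · intro a _; rfl
  simp only [hstep]
  rw [hbij]
  by_cases hd : d = 0
  · simp [hd, ZMod.val_zero]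
  · have hv0 : 0 < d.val := Nat.pos_of_ne_zero (fun h => hd ((ZMod.val_eq_zero d).mp h))
    have hz1 : Complex.exp (2 * (Real.pi : ℂ) * Complex.I / q) ^ d.val ≠ 1 :=
      hζ.pow_ne_one_of_pos_of_lt hv0.ne' (ZMod.val_lt d)
    rw [if_neg hd, geom_sum_eq hz1]
    rw [← pow_mul, mul_comm d.val q, pow_mul, zeta_pow_q q, one_pow]
    simp

lemma zchar_parseval (u : ZMod q) (hu : IsUnit u) (c : ZMod q → ℂ) :
    ∑ j : ZMod q, ‖∑ k : ZMod q, (starRingEnd ℂ) (zchar q (k * (u * j))) * c k‖ ^ 2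
      = q * ∑ k : ZMod q, ‖c k‖ ^ 2 := by
  have hconjS : ∀ j : ZMod q,
      (starRingEnd ℂ) (∑ k : ZMod q, (starRingEnd ℂ) (zchar q (k * (u * j))) * c k)
        = ∑ k : ZMod q, zchar q (k * (u * j)) * (starRingEnd ℂ) (c k) := fun j => by
    rw [map_sum]
    exact Finset.sum_congr rfl fun k _ => by rw [map_mul, Complex.conj_conj]
  have hexpand : ∀ j : ZMod q,
      (∑ k : ZMod q, (starRingEnd ℂ) (zchar q (k * (u * j))) * c k) *
        (starRingEnd ℂ) (∑ k : ZMod q, (starRingEnd ℂ) (zchar q (k * (u * j))) * c k)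
      = ∑ k : ZMod q, ∑ k' : ZMod q,
          c k * (starRingEnd ℂ) (c k') * zchar q (((k' - k) * u) * j) := fun j => by
    rw [hconjS j, Finset.sum_mul_sum]
    refine Finset.sum_congr rfl fun k _ => Finset.sum_congr rfl fun k' _ => ?_
    have h := conj_zchar_mul q (k * (u * j)) (k' * (u * j))
    calc ((starRingEnd ℂ) (zchar q (k * (u * j))) * c k) *
          (zchar q (k' * (u * j)) * (starRingEnd ℂ) (c k'))
        = c k * (starRingEnd ℂ) (c k') *
            ((starRingEnd ℂ) (zchar q (k * (u * j))) * zchar q (k' * (u * j))) := by ring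
      _ = c k * (starRingEnd ℂ) (c k') * zchar q (k' * (u * j) - k * (u * j)) := by rw [h]
      _ = _ := by rw [show k' * (u * j) - k * (u * j) = ((k' - k) * u) * j by ring]
  have main : ∑ j : ZMod q,
      ((∑ k : ZMod q, (starRingEnd ℂ) (zchar q (k * (u * j))) * c k) *
        (starRingEnd ℂ) (∑ k : ZMod q, (starRingEnd ℂ) (zchar q (k * (u * j))) * c k))
      = (q : ℂ) * ∑ k : ZMod q, c k * (starRingEnd ℂ) (c k) := by
    calc ∑ j : ZMod q,
        ((∑ k : ZMod q, (starRingEnd ℂ) (zchar q (k * (u * j))) * c k) *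
          (starRingEnd ℂ) (∑ k : ZMod q, (starRingEnd ℂ) (zchar q (k * (u * j))) * c k))
        = ∑ j : ZMod q, ∑ k : ZMod q, ∑ k' : ZMod q,
            c k * (starRingEnd ℂ) (c k') * zchar q (((k' - k) * u) * j) :=
          Finset.sum_congr rfl fun j _ => hexpand j
      _ = ∑ k : ZMod q, ∑ k' : ZMod q, ∑ j : ZMod q,
            c k * (starRingEnd ℂ) (c k') * zchar q (((k' - k) * u) * j) := by
          rw [Finset.sum_comm]
          exact Finset.sum_congr rfl fun k _ => Finset.sum_comm
      _ = ∑ k : ZMod q, ∑ k' : ZMod q,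
            c k * (starRingEnd ℂ) (c k') * (if (k' - k) * u = 0 then (q : ℂ) else 0) := by
          refine Finset.sum_congr rfl fun k _ => Finset.sum_congr rfl fun k' _ => ?_
          rw [← Finset.mul_sum, zchar_sum]
      _ = ∑ k : ZMod q, ∑ k' : ZMod q,
            (if k' = k then c k * (starRingEnd ℂ) (c k') * (q : ℂ) else 0) := by
          refine Finset.sum_congr rfl fun k _ => Finset.sum_congr rfl fun k' _ => ?_
          have hiff : (k' - k) * u = 0 ↔ k' = k := by
            rw [hu.mul_left_eq_zero, sub_eq_zero]
          simp only [mul_ite, mul_zero]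
          exact if_congr hiff rfl rfl
      _ = ∑ k : ZMod q, c k * (starRingEnd ℂ) (c k) * (q : ℂ) := by
          refine Finset.sum_congr rfl fun k _ => ?_
          rw [Finset.sum_ite_eq' Finset.univ k (fun k' => c k * (starRingEnd ℂ) (c k') * (q : ℂ))]
          simp
      _ = (q : ℂ) * ∑ k : ZMod q, c k * (starRingEnd ℂ) (c k) := by
          rw [Finset.mul_sum]
          exact Finset.sum_congr rfl fun k _ => by ring
  simp only [Complex.mul_conj] at main
  simp only [Complex.sq_norm]
  exact_mod_cast main

end AuxZChar

/-! ### Auxiliary function `auxF` and its properties -/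

/-- The auxiliary function `F_j(x) = e^{-2πiβ j.val x} ∑_k conj(ω^{ksj}) f(x,k)`. -/
def auxF (q : ℕ) [NeZero q] (s : ℕ) (β : ℝ) (f : ℝ × ZMod q → ℂ) (j : ZMod q) (x : ℝ) : ℂ :=
  Complex.exp (((-(2 * Real.pi * β * (j.val : ℝ) * x) : ℝ) : ℂ) * Complex.I) *
    ∑ k : ZMod q, (starRingEnd ℂ) (zchar q (k * ((s : ZMod q) * j))) * f (x, k)

lemma auxF_memℒp (q : ℕ) [NeZero q] (s : ℕ) (β : ℝ) (f : ℝ × ZMod q → ℂ)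
    (hf : MemL2q q f) (j : ZMod q) : MemLp (auxF q s β f j) 2 volume := by
  have hsum : MemLp (fun x : ℝ => ∑ k : ZMod q,
      (starRingEnd ℂ) (zchar q (k * ((s : ZMod q) * j))) * f (x, k)) 2 volume :=
    memLp_finset_sum Finset.univ fun k _ => (hf k).const_mul _
  have hphase : MemLp (fun x : ℝ =>
      Complex.exp (((-(2 * Real.pi * β * (j.val : ℝ) * x) : ℝ) : ℂ) * Complex.I)) ⊤ volume := by
    refine memLp_top_of_bound ?_ 1 (Filter.Eventually.of_forall fun x => ?_)
    · apply Continuous.aestronglyMeasurable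
      exact Complex.continuous_exp.comp
        ((Complex.continuous_ofReal.comp (by continuity)).mul continuous_const)
    · rw [Complex.norm_exp_ofReal_mul_I]
  exact hsum.smul hphase

lemma auxF_norm (q : ℕ) [NeZero q] (s : ℕ) (β : ℝ) (f : ℝ × ZMod q → ℂ)
    (hf : MemL2q q f) (hu : IsUnit ((s : ZMod q))) :
    ∑ j : ZMod q, norm2R (auxF q s β f j) = q * norm2q q f := by
  have hIj : ∀ j : ZMod q,
      Integrable (fun x : ℝ => ‖auxF q s β f j x‖ ^ 2) volume := fun j => by
    have h := (auxF_memℒp q s β f hf j).norm.integrable_sq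
    simpa using h
  have hIk : ∀ k : ZMod q,
      Integrable (fun x : ℝ => ‖f (x, k)‖ ^ 2) volume := fun k => by
    have h := (hf k).norm.integrable_sq
    simpa using h
  calc ∑ j : ZMod q, norm2R (auxF q s β f j)
      = ∫ x : ℝ, ∑ j : ZMod q, ‖auxF q s β f j x‖ ^ 2 :=
        (integral_finset_sum _ fun j _ => hIj j).symm
    _ = ∫ x : ℝ, (q : ℝ) * ∑ k : ZMod q, ‖f (x, k)‖ ^ 2 := by
        congr 1; funext x
        have habs : ∀ j : ZMod q, ‖auxF q s β f j x‖
            = ‖∑ k : ZMod q,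
                (starRingEnd ℂ) (zchar q (k * ((s : ZMod q) * j))) * f (x, k)‖ := fun j => by
          rw [auxF, norm_mul, Complex.norm_exp_ofReal_mul_I, one_mul]
        simp only [habs]
        exact zchar_parseval q ((s : ZMod q)) hu (fun k => f (x, k))
    _ = (q : ℝ) * ∑ k : ZMod q, ∫ x : ℝ, ‖f (x, k)‖ ^ 2 := by
        rw [integral_const_mul, integral_finset_sum _ fun k _ => hIk k]
    _ = q * norm2q q f := rfl

set_option maxHeartbeats 1000000 in
/-- The key computation: the inner product against a shifted atom on `ℝ×ℤ_q` of the
constant extension equals a 1D inner product against a Gabor atom of `auxF`. -/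
lemma aux_key (q : ℕ) [NeZero q] (α β : ℝ) (r s : ℕ) (gt : ℝ → ℂ) (hgt : MemLp gt 2 volume)
    (f : ℝ × ZMod q → ℂ) (hf : MemL2q q f) (n m : ℤ) :
    ipq q f (gpi q α β r s (n, m) (fun p => gt p.1))
      = ip1 (auxF q s β f ((m : ZMod q)))
          (gabor1 (α * n) (β * q * ((m / q : ℤ) : ℝ)) gt) := by
  have hint : ∀ k : ZMod q, Integrable (fun x : ℝ =>
      (starRingEnd ℂ) (zchar q (k * ((s : ZMod q) * (m : ZMod q)))) * f (x, k) *
        (Complex.exp (((-(2 * Real.pi * β * (((m : ZMod q)).val : ℝ) * x) : ℝ) : ℂ) * Complex.I) *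
          (starRingEnd ℂ) (gabor1 (α * n) (β * q * ((m / q : ℤ) : ℝ)) gt x))) volume := by
    intro k
    have hshift : MemLp (fun x : ℝ => gt (x - α * n)) 2 volume :=
      hgt.comp_measurePreserving (measurePreserving_sub_right volume (α * n))
    have hconj : MemLp (fun x : ℝ => (starRingEnd ℂ) (gt (x - α * n))) 2 volume := by
      refine ⟨RCLike.continuous_conj.comp_aestronglyMeasurable hshift.1, ?_⟩
      have h : eLpNorm (fun x : ℝ => (starRingEnd ℂ) (gt (x - α * n))) 2 volume
          = eLpNorm (fun x : ℝ => gt (x - α * n)) 2 volume := by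
        calc eLpNorm (fun x : ℝ => (starRingEnd ℂ) (gt (x - α * n))) 2 volume
            = eLpNorm (fun x : ℝ => ‖(starRingEnd ℂ) (gt (x - α * n))‖) 2 volume :=
              (eLpNorm_norm _).symm
          _ = eLpNorm (fun x : ℝ => ‖gt (x - α * n)‖) 2 volume := by
              simp only [RCLike.norm_conj]
          _ = eLpNorm (fun x : ℝ => gt (x - α * n)) 2 volume := eLpNorm_norm _
      rw [h]
      exact hshift.2
    have h1 : Integrable (fun x : ℝ => f (x, k) * (starRingEnd ℂ) (gt (x - α * n))) volume := by
      have h121 : (1 : ENNReal) / 1 = 1 / 2 + 1 / 2 := by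
        rw [div_one]; exact (ENNReal.add_halves 1).symm
      have h2 : MemLp ((fun x : ℝ => f (x, k)) • fun x : ℝ =>
          (starRingEnd ℂ) (gt (x - α * n))) 1 volume := hconj.smul (hf k)
      exact (memLp_one_iff_integrable.mp h2).congr
        (Filter.Eventually.of_forall fun x => rfl)
    have hmeas : AEStronglyMeasurable (fun x : ℝ =>
        (starRingEnd ℂ) (zchar q (k * ((s : ZMod q) * (m : ZMod q)))) *
          Complex.exp (((-(2 * Real.pi * β * (((m : ZMod q)).val : ℝ) * x) : ℝ) : ℂ) * Complex.I) *
          (starRingEnd ℂ) (Complex.exp (2 * (Real.pi : ℂ) * Complex.I *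
            ((β * (q : ℝ) * ((m / q : ℤ) : ℝ) : ℝ) : ℂ) * (x : ℂ)))) volume := by
      apply Continuous.aestronglyMeasurable
      apply Continuous.mul
      · exact continuous_const.mul (Complex.continuous_exp.comp
          ((Complex.continuous_ofReal.comp (by continuity)).mul continuous_const))
      · exact RCLike.continuous_conj.comp (Complex.continuous_exp.comp
          ((continuous_const.mul Complex.continuous_ofReal)))
    have hbdd : ∀ x : ℝ, ‖(starRingEnd ℂ) (zchar q (k * ((s : ZMod q) * (m : ZMod q)))) *
        Complex.exp (((-(2 * Real.pi * β * (((m : ZMod q)).val : ℝ) * x) : ℝ) : ℂ) * Complex.I) *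
        (starRingEnd ℂ) (Complex.exp (2 * (Real.pi : ℂ) * Complex.I *
          ((β * (q : ℝ) * ((m / q : ℤ) : ℝ) : ℝ) : ℂ) * (x : ℂ)))‖ ≤ 1 := by
      intro x
      have e1 : ‖(starRingEnd ℂ)
          (zchar q (k * ((s : ZMod q) * (m : ZMod q))))‖ = 1 := by
        rw [Complex.norm_conj]; exact zchar_abs q _
      have e2 : ‖Complex.exp
          (((-(2 * Real.pi * β * (((m : ZMod q)).val : ℝ) * x) : ℝ) : ℂ) * Complex.I)‖ = 1 :=
        Complex.norm_exp_ofReal_mul_I _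
      have e3 : ‖(starRingEnd ℂ) (Complex.exp (2 * (Real.pi : ℂ) * Complex.I *
          ((β * (q : ℝ) * ((m / q : ℤ) : ℝ) : ℝ) : ℂ) * (x : ℂ)))‖ = 1 := by
        rw [Complex.norm_conj, show 2 * (Real.pi : ℂ) * Complex.I *
            ((β * (q : ℝ) * ((m / q : ℤ) : ℝ) : ℝ) : ℂ) * (x : ℂ)
          = ((2 * Real.pi * (β * (q : ℝ) * ((m / q : ℤ) : ℝ)) * x : ℝ) : ℂ) * Complex.I by
            push_cast; ring, Complex.norm_exp_ofReal_mul_I]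
      simp only [norm_mul]
      rw [e1, e2, e3]
      norm_num
    have h3 := h1.bdd_mul hmeas (Filter.Eventually.of_forall hbdd)
    exact h3.congr (Filter.Eventually.of_forall fun x => by
      simp only [gabor1, map_mul]; ring)
  have hPE : ∀ x : ℝ,
      Complex.exp (((-(2 * Real.pi * β * (((m : ZMod q)).val : ℝ) * x) : ℝ) : ℂ) * Complex.I) *
        (starRingEnd ℂ) (Complex.exp (2 * (Real.pi : ℂ) * Complex.I *
          ((β * (q : ℝ) * ((m / q : ℤ) : ℝ) : ℝ) : ℂ) * (x : ℂ)))
      = (starRingEnd ℂ) (Complex.exp (2 * (Real.pi : ℂ) * Complex.I * (x : ℂ) *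
          ((β * (m : ℝ) : ℝ) : ℂ))) := by
    intro x
    have h2 : (q : ℤ) * (m / q) + (((m : ZMod q)).val : ℤ) = m := by
      rw [ZMod.val_intCast]; exact Int.mul_ediv_add_emod m q
    have hmC : (q : ℂ) * ((m / q : ℤ) : ℂ) + ((((m : ZMod q)).val : ℕ) : ℂ) = (m : ℂ) := by
      exact_mod_cast h2
    rw [← Complex.exp_conj, ← Complex.exp_conj, ← Complex.exp_add]
    congr 1
    simp only [map_mul, map_ofNat, Complex.conj_I, Complex.conj_ofReal]
    push_cast
    linear_combination (-(2 * (Real.pi : ℂ) * Complex.I * (x : ℂ) * (β : ℂ))) * hmC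
  have main : ip1 (auxF q s β f ((m : ZMod q)))
        (gabor1 (α * n) (β * q * ((m / q : ℤ) : ℝ)) gt)
      = ∑ k : ZMod q, ∫ x : ℝ, f (x, k) *
          (starRingEnd ℂ) (gpi q α β r s (n, m) (fun p => gt p.1) (x, k)) := by
    calc ip1 (auxF q s β f ((m : ZMod q))) (gabor1 (α * n) (β * q * ((m / q : ℤ) : ℝ)) gt)
        = ∫ x : ℝ, ∑ k : ZMod q,
            (starRingEnd ℂ) (zchar q (k * ((s : ZMod q) * (m : ZMod q)))) * f (x, k) *
            (Complex.exp (((-(2 * Real.pi * β * (((m : ZMod q)).val : ℝ) * x) : ℝ) : ℂ) *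
                Complex.I) *
              (starRingEnd ℂ) (gabor1 (α * n) (β * q * ((m / q : ℤ) : ℝ)) gt x)) := by
          simp only [ip1, auxF]
          congr 1; funext x
          rw [← Finset.sum_mul]
          ring
      _ = ∑ k : ZMod q, ∫ x : ℝ,
            (starRingEnd ℂ) (zchar q (k * ((s : ZMod q) * (m : ZMod q)))) * f (x, k) *
            (Complex.exp (((-(2 * Real.pi * β * (((m : ZMod q)).val : ℝ) * x) : ℝ) : ℂ) *
                Complex.I) *
              (starRingEnd ℂ) (gabor1 (α * n) (β * q * ((m / q : ℤ) : ℝ)) gt x)) :=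
          integral_finset_sum _ fun k _ => hint k
      _ = ∑ k : ZMod q, ∫ x : ℝ, f (x, k) *
            (starRingEnd ℂ) (gpi q α β r s (n, m) (fun p => gt p.1) (x, k)) := by
          refine Finset.sum_congr rfl fun k _ => ?_
          congr 1; funext x
          simp only [gpi, Msh, Tsh, gabor1, map_mul]
          have h := hPE x
          linear_combination ((starRingEnd ℂ) (zchar q (k * ((s : ZMod q) * (m : ZMod q)))) *
            f (x, k) * (starRingEnd ℂ) (gt (x - α * n))) * h
  simp only [ipq]
  exact main.symm

/-- Reindexing `ℤ² ≃ ℤ_q × ℤ²` splitting the frequency index `m = q M + j.val`. -/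
def auxE (q : ℕ) [NeZero q] : (ℤ × ℤ) ≃ (ZMod q × (ℤ × ℤ)) where
  toFun nm := ((nm.2 : ZMod q), (nm.1, nm.2 / q))
  invFun p := (p.2.1, q * p.2.2 + (p.1.val : ℤ))
  left_inv := by
    rintro ⟨n, m⟩
    simp only
    refine Prod.ext rfl ?_
    show (q : ℤ) * (m / q) + (((m : ZMod q)).val : ℤ) = m
    rw [ZMod.val_intCast]
    exact Int.mul_ediv_add_emod m q
  right_inv := by
    rintro ⟨j, n, M⟩
    have hq : (q : ℤ) ≠ 0 := by exact_mod_cast NeZero.ne q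
    refine Prod.ext ?_ (Prod.ext rfl ?_)
    · show (((q : ℤ) * M + (j.val : ℤ) : ℤ) : ZMod q) = j
      have hj : ((j.val : ℕ) : ZMod q) = j := ZMod.natCast_rightInverse j
      push_cast
      simp [ZMod.natCast_self, hj]
    · show ((q : ℤ) * M + (j.val : ℤ)) / q = M
      rw [add_comm, Int.add_mul_ediv_left _ _ hq,
        Int.ediv_eq_zero_of_lt (Int.natCast_nonneg _) (by exact_mod_cast ZMod.val_lt j),
        zero_add]

lemma auxE_apply (q : ℕ) [NeZero q] (nm : ℤ × ℤ) :
    auxE q nm = ((nm.2 : ZMod q), (nm.1, nm.2 / q)) := rfl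

set_option maxHeartbeats 1000000 in
/-- a Gabor frame generator for `L²(ℝ)` w.r.t. the lattice `αℤ × qβℤ`
yields (by constant extension in the discrete variable) a Gabor frame generator for
`L²(ℝ×ℤ_q)`, provided `1/(αβq²) + r°s°/q ∈ ℤ`. -/
theorem statement3 (q : ℕ) [NeZero q] (α β : ℝ) (hα : α ≠ 0) (hβ : β ≠ 0)
    (r s rc sc : ℕ) (hr : r < q) (hs : s < q) (hrc : rc < q) (hsc : sc < q)
    (hrq : Nat.Coprime r q) (hsq : Nat.Coprime s q)
    (hrrc : (r * rc) % q = 1 % q) (hssc : (s * sc) % q = 1 % q)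
    (hq1 : q = 1 → r = 0 ∧ s = 0 ∧ rc = 0 ∧ sc = 0)
    (hparam : ∃ z : ℤ, 1 / (α * β * (q : ℝ) ^ 2) + ((rc * sc : ℕ) : ℝ) / (q : ℝ) = (z : ℝ))
    (gt : ℝ → ℂ) (hgt : MemM1 0 gt)
    (hframe : ∃ A B : ℝ, 0 < A ∧ 0 < B ∧ ∀ f : ℝ → ℂ, MemLp f 2 volume →
      Summable (fun nm : ℤ × ℤ =>
        ‖ip1 f (gabor1 (α * nm.1) (β * q * nm.2) gt)‖ ^ 2) ∧
      A * norm2R f ≤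
        ∑' nm : ℤ × ℤ, ‖ip1 f (gabor1 (α * nm.1) (β * q * nm.2) gt)‖ ^ 2 ∧
      ∑' nm : ℤ × ℤ, ‖ip1 f (gabor1 (α * nm.1) (β * q * nm.2) gt)‖ ^ 2
        ≤ B * norm2R f) :
    IsGaborFrame q α β r s (fun p => gt p.1) := by
  obtain ⟨A, B, hA, hB, hfr⟩ := hframe
  have hq0 : 0 < (q : ℝ) := by exact_mod_cast Nat.pos_of_ne_zero (NeZero.ne q)
  have hsunit : IsUnit ((s : ZMod q)) := by
    have h1 : ((s * sc : ℕ) : ZMod q) = ((1 : ℕ) : ZMod q) :=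
      (ZMod.natCast_eq_natCast_iff _ _ _).mpr hssc
    push_cast at h1
    exact IsUnit.of_mul_eq_one _ h1
  refine ⟨q * A, q * B, mul_pos hq0 hA, mul_pos hq0 hB, ?_⟩
  intro f hf
  have hper := fun j : ZMod q => hfr (auxF q s β f j) (auxF_memℒp q s β f hf j)
  have key0 : ∀ n m : ℤ,
      ‖ipq q f (gpi q α β r s (n, m) (fun p => gt p.1))‖ ^ 2
      = ‖ip1 (auxF q s β f ((m : ZMod q)))
          (gabor1 (α * n) (β * q * ((m / q : ℤ) : ℝ)) gt)‖ ^ 2 := fun n m => by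
    rw [aux_key q α β r s gt hgt.1 f hf n m]
  have key : ∀ nm : ℤ × ℤ,
      ‖ipq q f (gpi q α β r s nm (fun p => gt p.1))‖ ^ 2
      = (fun p : ZMod q × (ℤ × ℤ) => ‖ip1 (auxF q s β f p.1)
          (gabor1 (α * p.2.1) (β * q * p.2.2) gt)‖ ^ 2) (auxE q nm) := by
    rintro ⟨n, m⟩
    exact key0 n m
  have hH : Summable (fun p : ZMod q × (ℤ × ℤ) => ‖ip1 (auxF q s β f p.1)
      (gabor1 (α * p.2.1) (β * q * p.2.2) gt)‖ ^ 2) :=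
    (summable_prod_of_nonneg (fun p => sq_nonneg _)).mpr
      ⟨fun j => (hper j).1, (hasSum_fintype _).summable⟩
  have hsum : Summable (fun nm : ℤ × ℤ =>
      ‖ipq q f (gpi q α β r s nm (fun p => gt p.1))‖ ^ 2) := by
    have h1 : Summable (fun nm : ℤ × ℤ =>
        (fun p : ZMod q × (ℤ × ℤ) => ‖ip1 (auxF q s β f p.1)
          (gabor1 (α * p.2.1) (β * q * p.2.2) gt)‖ ^ 2) (auxE q nm)) :=
      ((auxE q).summable_iff).mpr hH
    exact h1.congr fun nm => (key nm).symm
  have htsum : ∑' nm : ℤ × ℤ,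
      ‖ipq q f (gpi q α β r s nm (fun p => gt p.1))‖ ^ 2
      = ∑ j : ZMod q, ∑' nm : ℤ × ℤ, ‖ip1 (auxF q s β f j)
          (gabor1 (α * nm.1) (β * q * nm.2) gt)‖ ^ 2 := by
    calc ∑' nm : ℤ × ℤ, ‖ipq q f (gpi q α β r s nm (fun p => gt p.1))‖ ^ 2
        = ∑' nm : ℤ × ℤ, (fun p : ZMod q × (ℤ × ℤ) => ‖ip1 (auxF q s β f p.1)
            (gabor1 (α * p.2.1) (β * q * p.2.2) gt)‖ ^ 2) (auxE q nm) :=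
          tsum_congr fun nm => key nm
      _ = ∑' p : ZMod q × (ℤ × ℤ), ‖ip1 (auxF q s β f p.1)
            (gabor1 (α * p.2.1) (β * q * p.2.2) gt)‖ ^ 2 :=
          (auxE q).tsum_eq (fun p : ZMod q × (ℤ × ℤ) => ‖ip1 (auxF q s β f p.1)
            (gabor1 (α * p.2.1) (β * q * p.2.2) gt)‖ ^ 2)
      _ = ∑' j : ZMod q, ∑' nm : ℤ × ℤ, ‖ip1 (auxF q s β f j)
            (gabor1 (α * nm.1) (β * q * nm.2) gt)‖ ^ 2 :=
          Summable.tsum_prod' hH fun j => (hper j).1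
      _ = ∑ j : ZMod q, ∑' nm : ℤ × ℤ, ‖ip1 (auxF q s β f j)
            (gabor1 (α * nm.1) (β * q * nm.2) gt)‖ ^ 2 := tsum_fintype _
  have hnorm : ∑ j : ZMod q, norm2R (auxF q s β f j) = q * norm2q q f :=
    auxF_norm q s β f hf hsunit
  refine ⟨hsum, ?_, ?_⟩
  · calc (q : ℝ) * A * norm2q q f = A * ((q : ℝ) * norm2q q f) := by ring
      _ = A * ∑ j : ZMod q, norm2R (auxF q s β f j) := by rw [hnorm]
      _ = ∑ j : ZMod q, A * norm2R (auxF q s β f j) := Finset.mul_sum _ _ _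
      _ ≤ ∑ j : ZMod q, ∑' nm : ℤ × ℤ, ‖ip1 (auxF q s β f j)
            (gabor1 (α * nm.1) (β * q * nm.2) gt)‖ ^ 2 :=
          Finset.sum_le_sum fun j _ => (hper j).2.1
      _ = ∑' nm : ℤ × ℤ,
            ‖ipq q f (gpi q α β r s nm (fun p => gt p.1))‖ ^ 2 := htsum.symm
  · calc ∑' nm : ℤ × ℤ, ‖ipq q f (gpi q α β r s nm (fun p => gt p.1))‖ ^ 2
        = ∑ j : ZMod q, ∑' nm : ℤ × ℤ, ‖ip1 (auxF q s β f j)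
            (gabor1 (α * nm.1) (β * q * nm.2) gt)‖ ^ 2 := htsum
      _ ≤ ∑ j : ZMod q, B * norm2R (auxF q s β f j) :=
          Finset.sum_le_sum fun j _ => (hper j).2.2
      _ = B * ∑ j : ZMod q, norm2R (auxF q s β f j) := (Finset.mul_sum _ _ _).symm
      _ = B * ((q : ℝ) * norm2q q f) := by rw [hnorm]
      _ = (q : ℝ) * B * norm2q q f := by ring

end
end

section
/- Let g, h ∈ M¹_0(ℝ×ℤ_q) be a dual pair of Gabor frame generators. Then the sequence a : ℤ² → ℂ defined by a(n,m) = ⟨g, π_{n,m} h⟩ is idempotent for the twisted convolution: a ♮ a = a, i.e. for every (n,m) ∈ ℤ², ∑_{(n',m')∈ℤ²} a(n',m')·a(n−n', m−m')·e^{−2πi(αn'·β(m−m') + rn'·s(m−m')/q)} = a(n,m), the sum converging absolutely. -/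
open MeasureTheory Complex Real Filter Finset

noncomputable section

section Helpers

namespace Aux
variable (q : ℕ) [NeZero q]

lemma exp_two_pi_int (B : ℤ) : Complex.exp (2 * (Real.pi:ℂ) * Complex.I * B) = 1 := by
  rw [show 2 * (Real.pi:ℂ) * Complex.I * B = (B:ℂ) * (2 * (Real.pi:ℂ) * Complex.I) by ring]
  exact Complex.exp_int_mul_two_pi_mul_I B

lemma zchar_intCast (A : ℤ) :
    zchar q ((A : ℤ) : ZMod q) = Complex.exp (2 * (Real.pi:ℂ) * Complex.I * (A:ℂ) / (q:ℂ)) := by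
  have hq : (q:ℂ) ≠ 0 := Nat.cast_ne_zero.2 (NeZero.ne q)
  set v : ℕ := ((A : ZMod q)).val with hv
  have hcast : ((v : ℕ) : ZMod q) = ((A : ℤ) : ZMod q) := by
    have := ZMod.natCast_rightInverse (n := q) ((A : ZMod q))
    simpa [hv] using this
  have hdvd : (q : ℤ) ∣ (A - v) := by
    have : (((A - v) : ℤ) : ZMod q) = 0 := by
      push_cast
      rw [hcast]
      ring
    exact (ZMod.intCast_zmod_eq_zero_iff_dvd _ q).1 this
  obtain ⟨B, hB⟩ := hdvd
  have hA : (A : ℂ) = (v : ℂ) + (q : ℂ) * (B : ℂ) := by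
    have : (A : ℤ) = v + q * B := by linarith [hB]
    exact_mod_cast congrArg (Int.cast : ℤ → ℂ) this
  rw [zchar, show 2 * (Real.pi:ℂ) * Complex.I * (A:ℂ) / (q:ℂ)
      = 2 * (Real.pi:ℂ) * Complex.I * (v:ℂ) / (q:ℂ) + 2 * (Real.pi:ℂ) * Complex.I * (B:ℂ) by
    rw [hA]; field_simp]
  rw [Complex.exp_add, exp_two_pi_int, mul_one, hv]

lemma zchar_natCast (n : ℕ) :
    zchar q ((n : ℕ) : ZMod q) = Complex.exp (2 * (Real.pi:ℂ) * Complex.I * (n:ℂ) / (q:ℂ)) := by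
  simpa using zchar_intCast q (n : ℤ)

lemma zchar_zmod (a : ZMod q) :
    zchar q a = Complex.exp (2 * (Real.pi:ℂ) * Complex.I * (a.val : ℂ) / (q:ℂ)) := rfl

lemma zchar_add (a b : ZMod q) : zchar q (a + b) = zchar q a * zchar q b := by
  have ha : ((a.val : ℤ) : ZMod q) = a := by exact_mod_cast ZMod.natCast_rightInverse a
  have hb : ((b.val : ℤ) : ZMod q) = b := by exact_mod_cast ZMod.natCast_rightInverse b
  have h := zchar_intCast q ((a.val : ℤ) + (b.val : ℤ))
  rw [show (((a.val : ℤ) + (b.val : ℤ) : ℤ) : ZMod q) = a + b by push_cast [ha, hb]; ring] at h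
  rw [h, zchar_zmod, zchar_zmod, ← Complex.exp_add]
  congr 1
  push_cast
  ring

lemma zchar_conj (a : ZMod q) : (starRingEnd ℂ) (zchar q a) = zchar q (-a) := by
  have ha : ((a.val : ℤ) : ZMod q) = a := by exact_mod_cast ZMod.natCast_rightInverse a
  have h := zchar_intCast q (-(a.val : ℤ))
  rw [show ((-(a.val : ℤ) : ℤ) : ZMod q) = -a by push_cast [ha]; ring] at h
  rw [h, zchar_zmod, ← Complex.exp_conj]
  congr 1
  simp only [map_div₀, map_mul, Complex.conj_I, Complex.conj_ofReal, map_ofNat, map_natCast]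
  push_cast
  ring

lemma zchar_ofReal_mul_I (a : ZMod q) :
    zchar q a = Complex.exp (((2 * Real.pi * a.val / q : ℝ) : ℂ) * Complex.I) := by
  rw [zchar_zmod]
  congr 1
  push_cast
  ring

lemma zchar_abs (a : ZMod q) : ‖zchar q a‖ = 1 := by
  rw [zchar_ofReal_mul_I, Complex.norm_exp_ofReal_mul_I]

def e2 (u : ℝ) : ℂ := Complex.exp (2 * (Real.pi:ℂ) * Complex.I * (u:ℂ))

lemma e2_add (u v : ℝ) : e2 (u + v) = e2 u * e2 v := by
  rw [e2, e2, e2, ← Complex.exp_add]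
  congr 1
  push_cast
  ring

lemma e2_conj (u : ℝ) : (starRingEnd ℂ) (e2 u) = e2 (-u) := by
  rw [e2, e2, ← Complex.exp_conj]
  congr 1
  simp only [map_mul, Complex.conj_I, Complex.conj_ofReal, map_ofNat]
  push_cast
  ring

lemma e2_zero : e2 0 = 1 := by simp [e2]

lemma e2_abs (u : ℝ) : ‖e2 u‖ = 1 := by
  rw [show e2 u = Complex.exp (((2 * Real.pi * u : ℝ) : ℂ) * Complex.I) by
    rw [e2]; congr 1; push_cast; ring]
  exact Complex.norm_exp_ofReal_mul_I _

variable {α β : ℝ} {r s : ℕ}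

lemma gpi_apply (x : ℤ × ℤ) (f : ℝ × ZMod q → ℂ) (t : ℝ) (k : ZMod q) :
    gpi q α β r s x f (t, k) =
      e2 (t * (β * x.2)) * zchar q (k * ((s : ZMod q) * (x.2 : ZMod q))) *
        f (t - α * x.1, k - (r : ZMod q) * (x.1 : ZMod q)) := by
  simp only [gpi, Msh, Tsh, e2]
  congr 2
  push_cast
  ring

lemma gpi_zero (f : ℝ × ZMod q → ℂ) : gpi q α β r s 0 f = f := by
  funext p
  obtain ⟨t, k⟩ := p
  rw [gpi_apply]
  simp [e2_zero, zchar_zmod]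

lemma twFac_eq (x y : ℤ × ℤ) :
    twFac q α β r s x y = e2 (-(α * x.1 * (β * y.2))) *
      zchar q (-((r : ZMod q) * (x.1 : ZMod q) * ((s : ZMod q) * (y.2 : ZMod q)))) := by
  have h := zchar_intCast q (-((r : ℤ) * x.1 * ((s : ℤ) * y.2)))
  rw [show ((-((r : ℤ) * x.1 * ((s : ℤ) * y.2)) : ℤ) : ZMod q)
      = -((r : ZMod q) * (x.1 : ZMod q) * ((s : ZMod q) * (y.2 : ZMod q))) by push_cast; ring] at h
  rw [twFac, h, e2, ← Complex.exp_add]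
  congr 1
  have hq : (q:ℂ) ≠ 0 := Nat.cast_ne_zero.2 (NeZero.ne q)
  push_cast
  field_simp
  ring

lemma twFac_zero_right (x : ℤ × ℤ) : twFac q α β r s x 0 = 1 := by
  rw [twFac]
  simp

lemma twFac_abs (x y : ℤ × ℤ) : ‖twFac q α β r s x y‖ = 1 := by
  rw [twFac_eq, norm_mul, e2_abs, zchar_abs, one_mul]

lemma rearr (a₁ a₂ c₁ c₂ : ℝ) (b₁ b₂ d₁ d₂ : ZMod q) (G H : ℂ)
    (h1 : a₁ + a₂ = c₁ + c₂) (h2 : b₁ + b₂ = d₁ + d₂) :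
    e2 a₁ * zchar q b₁ * G * (e2 a₂ * zchar q b₂ * H)
      = e2 c₁ * zchar q d₁ * (G * (e2 c₂ * zchar q d₂ * H)) := by
  have hE : e2 a₁ * e2 a₂ = e2 c₁ * e2 c₂ := by rw [← e2_add, ← e2_add, h1]
  have hZ : zchar q b₁ * zchar q b₂ = zchar q d₁ * zchar q d₂ := by
    rw [← zchar_add, ← zchar_add, h2]
  calc e2 a₁ * zchar q b₁ * G * (e2 a₂ * zchar q b₂ * H)
      = (e2 a₁ * e2 a₂) * (zchar q b₁ * zchar q b₂) * (G * H) := by ring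
    _ = (e2 c₁ * e2 c₂) * (zchar q d₁ * zchar q d₂) * (G * H) := by rw [hE, hZ]
    _ = _ := by ring

set_option maxHeartbeats 1000000 in
lemma key_pointwise (g h : ℝ × ZMod q → ℂ) (x y : ℤ × ℤ) (t : ℝ) (k : ZMod q) :
    gpi q α β r s x g (t + α * (x.1 : ℝ), k + (r : ZMod q) * (x.1 : ZMod q)) *
      (starRingEnd ℂ) (gpi q α β r s y h (t + α * (x.1 : ℝ), k + (r : ZMod q) * (x.1 : ZMod q)))
    = twFac q α β r s x (y - x) *
      (g (t, k) * (starRingEnd ℂ) (gpi q α β r s (y - x) h (t, k))) := by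
  rw [gpi_apply, gpi_apply, gpi_apply, twFac_eq]
  simp only [map_mul, e2_conj, zchar_conj, Prod.fst_sub, Prod.snd_sub, Int.cast_sub,
    add_sub_cancel_right]
  rw [show t + α * (x.1:ℝ) - α * (y.1:ℝ) = t - α * ((y.1:ℝ) - (x.1:ℝ)) by ring]
  rw [show k + (r : ZMod q) * (x.1 : ZMod q) - (r : ZMod q) * (y.1 : ZMod q)
      = k - (r : ZMod q) * ((y.1 : ZMod q) - (x.1 : ZMod q)) by ring]
  apply rearr
  · ring
  · ring

lemma ipq_gpi_gpi (g h : ℝ × ZMod q → ℂ) (x y : ℤ × ℤ) :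
    ipq q (gpi q α β r s x g) (gpi q α β r s y h)
      = twFac q α β r s x (y - x) * ipq q g (gpi q α β r s (y - x) h) := by
  set ρ₁ : ZMod q := (r : ZMod q) * (x.1 : ZMod q) with hρ
  rw [ipq, ipq, Finset.mul_sum]
  have step : ∀ k : ZMod q,
      (∫ t : ℝ, gpi q α β r s x g (t, k + ρ₁) * (starRingEnd ℂ) (gpi q α β r s y h (t, k + ρ₁)))
      = twFac q α β r s x (y - x) *
        ∫ t : ℝ, g (t, k) * (starRingEnd ℂ) (gpi q α β r s (y - x) h (t, k)) := by
    intro k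
    rw [← MeasureTheory.integral_add_right_eq_self
      (fun t : ℝ => gpi q α β r s x g (t, k + ρ₁) * (starRingEnd ℂ) (gpi q α β r s y h (t, k + ρ₁)))
      (α * (x.1 : ℝ)), ← MeasureTheory.integral_const_mul]
    exact integral_congr_ae (Eventually.of_forall fun t => key_pointwise q g h x y t k)
  calc (∑ k : ZMod q, ∫ t : ℝ, gpi q α β r s x g (t, k) * (starRingEnd ℂ) (gpi q α β r s y h (t, k)))
      = ∑ k : ZMod q, ∫ t : ℝ,
          gpi q α β r s x g (t, k + ρ₁) * (starRingEnd ℂ) (gpi q α β r s y h (t, k + ρ₁)) := by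
        exact (Fintype.sum_equiv (Equiv.addRight ρ₁)
          (fun k => ∫ t : ℝ,
            gpi q α β r s x g (t, k + ρ₁) * (starRingEnd ℂ) (gpi q α β r s y h (t, k + ρ₁)))
          _ (fun k => rfl)).symm
    _ = _ := by simp only [step]

lemma ipq_conj (f g : ℝ × ZMod q → ℂ) : (starRingEnd ℂ) (ipq q f g) = ipq q g f := by
  rw [ipq, ipq, map_sum]
  refine Finset.sum_congr rfl fun k _ => ?_
  rw [← integral_conj]
  refine integral_congr_ae (Eventually.of_forall fun t => ?_)
  simp [mul_comm]

lemma cont_e2 (c : ℝ) : Continuous fun t : ℝ => e2 (t * c) :=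
  Complex.continuous_exp.comp (continuous_const.mul
    (Complex.continuous_ofReal.comp (continuous_id.mul continuous_const)))

lemma gpi_slice_eq (x : ℤ × ℤ) (f : ℝ × ZMod q → ℂ) (k : ZMod q) :
    (fun t : ℝ => gpi q α β r s x f (t, k)) = fun t : ℝ =>
      e2 (t * (β * x.2)) * zchar q (k * ((s : ZMod q) * (x.2 : ZMod q))) *
        f (t - α * x.1, k - (r : ZMod q) * (x.1 : ZMod q)) :=
  funext fun t => gpi_apply q x f t k

lemma memL2q_gpi (f : ℝ × ZMod q → ℂ) (hf : MemL2q q f) (x : ℤ × ℤ) :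
    MemL2q q (gpi q α β r s x f) := by
  intro k
  have hw : MemLp ((fun u : ℝ => f (u, k - (r : ZMod q) * (x.1 : ZMod q))) ∘
      (fun t : ℝ => t - α * (x.1 : ℝ))) 2 volume :=
    (hf (k - (r : ZMod q) * (x.1 : ZMod q))).comp_measurePreserving
      (measurePreserving_sub_right volume (α * (x.1 : ℝ)))
  rw [gpi_slice_eq]
  refine MemLp.of_le hw ?_ ?_
  · exact ((cont_e2 (β * x.2)).aestronglyMeasurable.mul aestronglyMeasurable_const).mul
      hw.aestronglyMeasurable
  · refine Eventually.of_forall fun t => le_of_eq ?_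
    simp [norm_mul, e2_abs, zchar_abs, Function.comp]

lemma gpi_slice_ae_zero (f : ℝ × ZMod q → ℂ)
    (hf : ∀ k : ZMod q, (fun t : ℝ => f (t, k)) =ᵐ[volume] 0) (x : ℤ × ℤ) (k : ZMod q) :
    (fun t : ℝ => gpi q α β r s x f (t, k)) =ᵐ[volume] 0 := by
  have h0 := hf (k - (r : ZMod q) * (x.1 : ZMod q))
  have h1 : ((fun u : ℝ => f (u, k - (r : ZMod q) * (x.1 : ZMod q))) ∘
      (fun t : ℝ => t - α * (x.1 : ℝ))) =ᵐ[volume]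
      ((0 : ℝ → ℂ) ∘ (fun t : ℝ => t - α * (x.1 : ℝ))) :=
    (measurePreserving_sub_right volume (α * (x.1 : ℝ))).quasiMeasurePreserving.ae_eq_comp h0
  rw [gpi_slice_eq]
  filter_upwards [h1] with t ht
  simp only [Function.comp_apply, Pi.zero_apply] at ht
  simp [ht]

lemma ipq_zero_right (g f : ℝ × ZMod q → ℂ)
    (hf : ∀ k : ZMod q, (fun t : ℝ => f (t, k)) =ᵐ[volume] 0) : ipq q g f = 0 := by
  rw [ipq]
  refine Finset.sum_eq_zero fun k _ => ?_
  rw [show (0 : ℂ) = ∫ t : ℝ, (0 : ℂ) by simp]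
  refine integral_congr_ae ?_
  filter_upwards [hf k] with t ht
  simp only [Pi.zero_apply] at ht
  simp [ht]

abbrev HS (q : ℕ) [NeZero q] := PiLp 2 (fun _ : ZMod q => Lp ℂ 2 (volume : Measure ℝ))

def toH (f : ℝ × ZMod q → ℂ) (hf : MemL2q q f) : HS q :=
  WithLp.toLp 2 (fun k => MemLp.toLp (fun t : ℝ => f (t, k)) (hf k))

lemma inner_toH (f g' : ℝ × ZMod q → ℂ) (hf : MemL2q q f) (hg : MemL2q q g') :
    inner ℂ (toH q g' hg) (toH q f hf) = ipq q f g' := by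
  rw [PiLp.inner_apply, ipq]
  refine Finset.sum_congr rfl fun k _ => ?_
  rw [MeasureTheory.L2.inner_def]
  refine integral_congr_ae ?_
  filter_upwards [(hg k).coeFn_toLp, (hf k).coeFn_toLp] with t h1 h2
  rw [RCLike.inner_apply]
  show (toH q f hf) k t * (starRingEnd ℂ) ((toH q g' hg) k t) = _
  rw [show ((toH q g' hg) k : ℝ → ℂ) t = g' (t, k) from h1,
    show ((toH q f hf) k : ℝ → ℂ) t = f (t, k) from h2]

lemma norm_toLp_sq (w : ℝ → ℂ) (hw : MemLp w 2 (volume : Measure ℝ)) :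
    ‖MemLp.toLp w hw‖ ^ 2 = ∫ t : ℝ, ‖w t‖ ^ 2 := by
  rw [← inner_self_eq_norm_sq (𝕜 := ℂ), MeasureTheory.L2.inner_def]
  have key : (∫ a : ℝ, (inner ℂ ((MemLp.toLp w hw : ℝ →ₘ[volume] ℂ) a)
        ((MemLp.toLp w hw : ℝ →ₘ[volume] ℂ) a) : ℂ))
      = ((∫ t : ℝ, ‖w t‖ ^ 2 : ℝ) : ℂ) := by
    rw [show ((∫ t : ℝ, ‖w t‖ ^ 2 : ℝ) : ℂ)
        = ∫ t : ℝ, ((‖w t‖ ^ 2 : ℝ) : ℂ) from (integral_ofReal (𝕜 := ℂ)).symm]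
    refine integral_congr_ae ?_
    filter_upwards [hw.coeFn_toLp] with t ht
    rw [RCLike.inner_apply]
    show (MemLp.toLp w hw : ℝ → ℂ) t * (starRingEnd ℂ) ((MemLp.toLp w hw : ℝ → ℂ) t) = _
    rw [show ((MemLp.toLp w hw : ℝ → ℂ)) t = w t from ht]
    rw [Complex.mul_conj, ← Complex.sq_norm]
  rw [key]
  simp

lemma norm_toH_sq (f : ℝ × ZMod q → ℂ) (hf : MemL2q q f) :
    ‖toH q f hf‖ ^ 2 = norm2q q f := by
  rw [PiLp.norm_sq_eq_of_L2, norm2q]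
  exact Finset.sum_congr rfl fun k _ => norm_toLp_sq (fun t => f (t, k)) (hf k)

lemma Lp_coeFn_sum {ι : Type*} (F : Finset ι) (v : ι → Lp ℂ 2 (volume : Measure ℝ)) :
    ⇑(∑ x ∈ F, v x) =ᵐ[volume] fun t => ∑ x ∈ F, (v x : ℝ → ℂ) t := by
  classical
  induction F using Finset.induction_on with
  | empty =>
    simp only [Finset.sum_empty]
    exact MeasureTheory.Lp.coeFn_zero (E := ℂ) (p := 2) (μ := (volume : Measure ℝ))
  | @insert a F ha ih =>
    rw [Finset.sum_insert ha]
    filter_upwards [MeasureTheory.Lp.coeFn_add (v a) (∑ x ∈ F, v x), ih] with t h1 h2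
    rw [h1]
    simp only [Pi.add_apply, Finset.sum_insert ha, h2]

lemma piLp_sum_apply {ι : Type*} (F : Finset ι) (w : ι → HS q) (k : ZMod q) :
    (∑ x ∈ F, w x) k = ∑ x ∈ F, w x k := by
  classical
  induction F using Finset.induction_on with
  | empty => rfl
  | @insert a F ha ih => rw [Finset.sum_insert ha, Finset.sum_insert ha, PiLp.add_apply, ih]

lemma toLp_sub_sum {ι : Type*} (F : Finset ι) (w : ℝ → ℂ) (u : ι → ℝ → ℂ) (c : ι → ℂ)
    (hw : MemLp w 2 (volume : Measure ℝ)) (hu : ∀ x, MemLp (u x) 2 (volume : Measure ℝ))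
    (hbig : MemLp (fun t => w t - ∑ x ∈ F, c x * u x t) 2 (volume : Measure ℝ)) :
    MemLp.toLp _ hbig = MemLp.toLp w hw - ∑ x ∈ F, c x • MemLp.toLp (u x) (hu x) := by
  apply MeasureTheory.Lp.ext
  have hsmul : ∀ᵐ t ∂(volume : Measure ℝ), ∀ x ∈ F,
      ((c x • MemLp.toLp (u x) (hu x) : Lp ℂ 2 volume) : ℝ → ℂ) t = c x * u x t := by
    rw [Filter.eventually_all_finset]
    intro x hx
    filter_upwards [MeasureTheory.Lp.coeFn_smul (c x) (MemLp.toLp (u x) (hu x)),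
      (hu x).coeFn_toLp] with t h1 h2
    rw [h1]
    simp [h2]
  filter_upwards [hbig.coeFn_toLp, hw.coeFn_toLp,
    MeasureTheory.Lp.coeFn_sub (MemLp.toLp w hw) (∑ x ∈ F, c x • MemLp.toLp (u x) (hu x)),
    Lp_coeFn_sum F (fun x => c x • MemLp.toLp (u x) (hu x)), hsmul] with t h1 h2 h3 h4 h5
  rw [h1, h3]
  simp only [Pi.sub_apply, h2, h4]
  congr 1
  exact (Finset.sum_congr rfl h5).symm

variable (α β) (r s) in
lemma toH_sub_sum (f h : ℝ × ZMod q → ℂ) (hf : MemL2q q f) (hh : MemL2q q h)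
    (c : ℤ × ℤ → ℂ) (F : Finset (ℤ × ℤ))
    (hbig : MemL2q q (fun p => f p - ∑ x ∈ F, c x * gpi q α β r s x h p)) :
    toH q _ hbig = toH q f hf - ∑ x ∈ F, c x • toH q (gpi q α β r s x h) (memL2q_gpi q h hh x) := by
  refine PiLp.ext fun k => ?_
  rw [show (toH q f hf - ∑ x ∈ F, c x • toH q (gpi q α β r s x h) (memL2q_gpi q h hh x)) k
      = toH q f hf k - ∑ x ∈ F, c x • toH q (gpi q α β r s x h) (memL2q_gpi q h hh x) k by
    rw [PiLp.sub_apply, piLp_sum_apply]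
    exact congrArg _ (Finset.sum_congr rfl fun x _ => PiLp.smul_apply _ (c x) _ k)]
  have hb : MemLp (fun t => f (t, k) - ∑ x ∈ F, c x * gpi q α β r s x h (t, k)) 2
      (volume : Measure ℝ) := by simpa using hbig k
  exact toLp_sub_sum F (fun t => f (t, k)) (fun x t => gpi q α β r s x h (t, k)) c
    (hf k) (fun x => memL2q_gpi q h hh x k) hb

variable (α β) (r s) in
lemma hasSum_of_dual (g h : ℝ × ZMod q → ℂ) (hhL2 : MemL2q q h)
    (hdual : IsDualPair q α β r s g h) (f : ℝ × ZMod q → ℂ) (hf : MemL2q q f) :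
    HasSum (fun x : ℤ × ℤ => ipq q f (gpi q α β r s x g) •
      toH q (gpi q α β r s x h) (memL2q_gpi q h hhL2 x)) (toH q f hf) := by
  have ht := hdual f hf
  set c : ℤ × ℤ → ℂ := fun x => ipq q f (gpi q α β r s x g) with hc
  have hbig : ∀ F : Finset (ℤ × ℤ),
      MemL2q q (fun p => f p - ∑ x ∈ F, c x * gpi q α β r s x h p) := by
    intro F k
    have h1 : MemLp (fun t : ℝ => ∑ x ∈ F, c x * gpi q α β r s x h (t, k)) 2 volume :=
      memLp_finset_sum F fun x _ => (memL2q_gpi q h hhL2 x k).const_mul (c x)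
    exact (hf k).sub h1
  set vH : ℤ × ℤ → HS q := fun x => toH q (gpi q α β r s x h) (memL2q_gpi q h hhL2 x) with hvH
  have hnorm : ∀ F : Finset (ℤ × ℤ),
      norm2q q (fun p => f p - ∑ x ∈ F, c x * gpi q α β r s x h p)
        = ‖toH q f hf - ∑ x ∈ F, c x • vH x‖ ^ 2 := by
    intro F
    rw [← norm_toH_sq q _ (hbig F), toH_sub_sum q α β r s f h hf hhL2 c F (hbig F)]
  have h2 : Tendsto (fun F : Finset (ℤ × ℤ) => ‖toH q f hf - ∑ x ∈ F, c x • vH x‖ ^ 2)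
      atTop (nhds 0) := ht.congr hnorm
  have h3 : Tendsto (fun F : Finset (ℤ × ℤ) => ‖toH q f hf - ∑ x ∈ F, c x • vH x‖)
      atTop (nhds 0) := by
    have h4 := h2.sqrt
    rw [Real.sqrt_zero] at h4
    refine h4.congr fun F => ?_
    exact Real.sqrt_sq (norm_nonneg _)
  have h5 : Tendsto (fun F : Finset (ℤ × ℤ) => toH q f hf - ∑ x ∈ F, c x • vH x)
      atTop (nhds 0) := tendsto_zero_iff_norm_tendsto_zero.2 h3
  have h6 : Tendsto (fun F : Finset (ℤ × ℤ) => ∑ x ∈ F, c x • vH x)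
      atTop (nhds (toH q f hf)) := by
    have h7 := (tendsto_const_nhds (x := toH q f hf) (f := (atTop : Filter (Finset (ℤ × ℤ))))).sub h5
    rw [sub_zero] at h7
    refine h7.congr fun F => ?_
    abel
  exact h6

instance : CompleteSpace (HS q) :=
  inferInstance

lemma summable_norm_sq_of_hasSum {v : ℤ × ℤ → HS q} {S : HS q} (hv : HasSum v S) :
    Summable fun x : ℤ × ℤ => ‖v x‖ ^ 2 := by
  classical
  have sign : ∀ F : Finset (ℤ × ℤ), ∃ ε : ℤ × ℤ → ℂ, (∀ i, ε i = 1 ∨ ε i = -1) ∧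
      ∑ i ∈ F, ‖v i‖ ^ 2 ≤ ‖∑ i ∈ F, ε i • v i‖ ^ 2 := by
    intro F
    induction F using Finset.induction_on with
    | empty => exact ⟨fun _ => 1, fun _ => Or.inl rfl, by simp⟩
    | @insert a F ha ih =>
      obtain ⟨ε, hε, hle⟩ := ih
      have par := parallelogram_law_with_norm ℂ (∑ i ∈ F, ε i • v i) (v a)
      rcases le_total (‖(∑ i ∈ F, ε i • v i) - v a‖) (‖(∑ i ∈ F, ε i • v i) + v a‖) with hc | hc
      · refine ⟨Function.update ε a 1, fun i => ?_, ?_⟩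
        · rcases eq_or_ne i a with rfl | hi
          · simp
          · simpa [Function.update_of_ne hi] using hε i
        · have hsum : ∑ i ∈ insert a F, Function.update ε a 1 i • v i
              = v a + ∑ i ∈ F, ε i • v i := by
            rw [Finset.sum_insert ha]
            simp only [Function.update_self, one_smul]
            congr 1
            exact Finset.sum_congr rfl fun i hi =>
              by rw [Function.update_of_ne (by rintro rfl; exact ha hi)]
          rw [hsum, Finset.sum_insert ha]
          have h1 : ‖∑ i ∈ F, ε i • v i‖ ^ 2 + ‖v a‖ ^ 2 ≤ ‖(∑ i ∈ F, ε i • v i) + v a‖ ^ 2 := by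
            nlinarith [norm_nonneg ((∑ i ∈ F, ε i • v i) - v a),
              norm_nonneg ((∑ i ∈ F, ε i • v i) + v a)]
          have h2 : ‖(∑ i ∈ F, ε i • v i) + v a‖ ^ 2 = ‖v a + ∑ i ∈ F, ε i • v i‖ ^ 2 := by
            rw [add_comm]
          nlinarith [hle]
      · refine ⟨Function.update ε a (-1), fun i => ?_, ?_⟩
        · rcases eq_or_ne i a with rfl | hi
          · simp
          · simpa [Function.update_of_ne hi] using hε i
        · have hsum : ∑ i ∈ insert a F, Function.update ε a (-1) i • v i
              = (∑ i ∈ F, ε i • v i) - v a := by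
            rw [Finset.sum_insert ha]
            simp only [Function.update_self, neg_smul, one_smul]
            rw [show ((∑ i ∈ F, ε i • v i) - v a) = -v a + ∑ i ∈ F, ε i • v i by abel]
            congr 1
            exact Finset.sum_congr rfl fun i hi =>
              by rw [Function.update_of_ne (by rintro rfl; exact ha hi)]
          rw [hsum, Finset.sum_insert ha]
          have h1 : ‖∑ i ∈ F, ε i • v i‖ ^ 2 + ‖v a‖ ^ 2 ≤ ‖(∑ i ∈ F, ε i • v i) - v a‖ ^ 2 := by
            nlinarith [norm_nonneg ((∑ i ∈ F, ε i • v i) - v a),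
              norm_nonneg ((∑ i ∈ F, ε i • v i) + v a)]
          nlinarith [hle]
  obtain ⟨F₀, hF₀⟩ := (summable_iff_vanishing.1 hv.summable) (Metric.ball 0 1)
    (Metric.ball_mem_nhds 0 one_pos)
  set B : ℝ := ∑ i ∈ F₀, ‖v i‖ with hB
  have hB0 : 0 ≤ B := Finset.sum_nonneg fun i _ => norm_nonneg _
  have bound : ∀ F : Finset (ℤ × ℤ), ∑ i ∈ F, ‖v i‖ ^ 2 ≤ (B + 2) ^ 2 := by
    intro F
    obtain ⟨ε, hε, hle⟩ := sign F
    have habs : ∀ i, ‖ε i‖ = 1 := by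
      intro i
      rcases hε i with h | h <;> simp [h]
    have h1 : ‖∑ i ∈ F, ε i • v i‖ ≤ B + 2 := by
      rw [← Finset.sum_inter_add_sum_sdiff F F₀ (fun i => ε i • v i)]
      set P := (F \ F₀).filter fun i => ε i = 1 with hP
      set N := (F \ F₀).filter fun i => ¬(ε i = 1) with hN
      have hPN : ∑ i ∈ F \ F₀, ε i • v i = (∑ i ∈ P, v i) - ∑ i ∈ N, v i := by
        rw [← Finset.sum_filter_add_sum_filter_not (F \ F₀) (fun i => ε i = 1)
          (fun i => ε i • v i)]
        rw [sub_eq_add_neg, ← Finset.sum_neg_distrib]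
        congr 1
        · exact Finset.sum_congr rfl fun i hi => by
            rw [(Finset.mem_filter.1 hi).2, one_smul]
        · exact Finset.sum_congr rfl fun i hi => by
            have := (Finset.mem_filter.1 hi).2
            rcases hε i with h | h
            · exact absurd h this
            · rw [h, neg_smul, one_smul]
      have hInter : ‖∑ i ∈ F ∩ F₀, ε i • v i‖ ≤ B := by
        refine le_trans (norm_sum_le _ _) ?_
        have e1 : ∑ i ∈ F ∩ F₀, ‖ε i • v i‖ = ∑ i ∈ F ∩ F₀, ‖v i‖ :=
          Finset.sum_congr rfl fun i _ => by rw [norm_smul, habs i, one_mul]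
        rw [e1, hB]
        exact Finset.sum_le_sum_of_subset_of_nonneg Finset.inter_subset_right
          fun i _ _ => norm_nonneg _
      have hDisjP : Disjoint P F₀ :=
        (Finset.sdiff_disjoint).mono_left (Finset.filter_subset _ _)
      have hDisjN : Disjoint N F₀ :=
        (Finset.sdiff_disjoint).mono_left (Finset.filter_subset _ _)
      have hP1 : ‖∑ i ∈ P, v i‖ < 1 := by
        have := hF₀ P hDisjP
        rwa [Metric.mem_ball, dist_zero_right] at this
      have hN1 : ‖∑ i ∈ N, v i‖ < 1 := by
        have := hF₀ N hDisjN
        rwa [Metric.mem_ball, dist_zero_right] at this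
      calc ‖(∑ i ∈ F ∩ F₀, ε i • v i) + ∑ i ∈ F \ F₀, ε i • v i‖
          ≤ ‖∑ i ∈ F ∩ F₀, ε i • v i‖ + ‖∑ i ∈ F \ F₀, ε i • v i‖ := norm_add_le _ _
        _ ≤ B + (‖∑ i ∈ P, v i‖ + ‖∑ i ∈ N, v i‖) := by
            rw [hPN]
            exact add_le_add hInter (norm_sub_le _ _)
        _ ≤ B + 2 := by linarith
    refine le_trans hle ?_
    have h0 : (0 : ℝ) ≤ ‖∑ i ∈ F, ε i • v i‖ := norm_nonneg _
    nlinarith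
  exact summable_of_sum_le (fun i => sq_nonneg _) bound

end Aux

end Helpers

/-- for a dual pair `g, h` of Gabor frame generators, the sequence
`a(n,m) = ⟨g, π_{n,m}h⟩` is idempotent for the twisted convolution. -/
theorem statement4 (q : ℕ) [NeZero q] (α β : ℝ) (hα : α ≠ 0) (hβ : β ≠ 0)
    (r s : ℕ) (hr : r < q) (hs : s < q) (hrq : Nat.Coprime r q) (hsq : Nat.Coprime s q)
    (g h : ℝ × ZMod q → ℂ) (hg : MemM1q q 0 g) (hh : MemM1q q 0 h)
    (hdual : IsDualPair q α β r s g h)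
    (a : ℤ × ℤ → ℂ) (ha : ∀ nm : ℤ × ℤ, a nm = ipq q g (gpi q α β r s nm h)) :
    ∀ nm : ℤ × ℤ,
      Summable (fun x : ℤ × ℤ =>
        ‖a x * a (nm - x) * twFac q α β r s x (nm - x)‖) ∧
      twConv q α β r s a a nm = a nm := by
  classical
  intro nm
  have hgL2 : MemL2q q g := fun k => (hg k).1
  have hhL2 : MemL2q q h := fun k => (hh k).1
  set Th : Aux.HS q := Aux.toH q h hhL2 with hTh
  by_cases hC : Th = 0
  · -- degenerate case : h = 0 in L², so a ≡ 0
    have hzero : ∀ k : ZMod q, (fun t : ℝ => h (t, k)) =ᵐ[volume] 0 := by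
      intro k
      have h1 : (MemLp.toLp (fun t : ℝ => h (t, k)) (hhL2 k)) = 0 := congrArg (fun v : Aux.HS q => v k) hC
      have h2 := (hhL2 k).coeFn_toLp
      rw [h1] at h2
      exact h2.symm.trans (MeasureTheory.Lp.coeFn_zero _ _ _)
    have ha0 : ∀ x : ℤ × ℤ, a x = 0 := by
      intro x
      rw [ha x]
      exact Aux.ipq_zero_right q g _ fun k => Aux.gpi_slice_ae_zero q h hzero x k
    constructor
    · refine (summable_congr fun x => ?_).2 summable_zero
      rw [ha0 x]
      simp
    · rw [twConv, ha0 nm]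
      rw [show (fun x : ℤ × ℤ => a x * a (nm - x) * twFac q α β r s x (nm - x))
          = fun _ : ℤ × ℤ => (0 : ℂ) from funext fun x => by rw [ha0 x]; ring]
      exact tsum_zero
  · -- main case
    set vH : ℤ × ℤ → Aux.HS q :=
      fun x => Aux.toH q (gpi q α β r s x h) (Aux.memL2q_gpi q h hhL2 x) with hvH
    set Tg : Aux.HS q := Aux.toH q g hgL2 with hTg
    have hnorm_vH : ∀ x : ℤ × ℤ, ‖vH x‖ = ‖Th‖ := by
      intro x
      have hsq : ‖vH x‖ ^ 2 = ‖Th‖ ^ 2 := by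
        rw [← inner_self_eq_norm_sq (𝕜 := ℂ) (vH x), ← inner_self_eq_norm_sq (𝕜 := ℂ) Th]
        congr 1
        rw [hvH, hTh]
        rw [Aux.inner_toH, Aux.inner_toH, Aux.ipq_gpi_gpi, sub_self, Aux.twFac_zero_right,
          Aux.gpi_zero, one_mul]
      calc ‖vH x‖ = Real.sqrt (‖vH x‖ ^ 2) := (Real.sqrt_sq (norm_nonneg _)).symm
        _ = Real.sqrt (‖Th‖ ^ 2) := by rw [hsq]
        _ = ‖Th‖ := Real.sqrt_sq (norm_nonneg _)
    -- Summability of |a|²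
    set d : ℤ × ℤ → ℂ := fun x => ipq q h (gpi q α β r s x g) with hd'
    have Hd : HasSum (fun x : ℤ × ℤ => d x • vH x) Th :=
      Aux.hasSum_of_dual q α β r s g h hhL2 hdual h hhL2
    have Hsq := Aux.summable_norm_sq_of_hasSum q Hd
    have h8 : (fun x : ℤ × ℤ => ‖d x • vH x‖ ^ 2) = fun x => ‖d x‖ ^ 2 * ‖Th‖ ^ 2 :=
      funext fun x => by rw [norm_smul, hnorm_vH x, mul_pow]
    rw [h8] at Hsq
    have hC2 : (‖Th‖ ^ 2) ≠ 0 := pow_ne_zero _ (norm_ne_zero_iff.2 hC)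
    have Hd2 : Summable fun x : ℤ × ℤ => ‖d x‖ ^ 2 := by
      have h9 := Hsq.div_const (‖Th‖ ^ 2)
      refine h9.congr fun x => ?_
      field_simp
    have hdabs : ∀ x : ℤ × ℤ, ‖d x‖ = ‖a (-x)‖ := by
      intro x
      have e1 : d x = (starRingEnd ℂ) (ipq q (gpi q α β r s x g) h) :=
        (Aux.ipq_conj q _ _).symm
      have e2 : ipq q (gpi q α β r s x g) h
          = twFac q α β r s x (0 - x) * ipq q g (gpi q α β r s (0 - x) h) := by
        conv_lhs => rw [show h = gpi q α β r s 0 h from (Aux.gpi_zero q h).symm]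
        exact Aux.ipq_gpi_gpi q g h x 0
      rw [e1, Complex.norm_conj, e2, norm_mul, Aux.twFac_abs, one_mul,
        zero_sub, ← ha]
    have SA : Summable fun x : ℤ × ℤ => ‖a x‖ ^ 2 := by
      have h10 : Summable ((fun x : ℤ × ℤ => ‖a x‖ ^ 2) ∘ (Equiv.neg (ℤ × ℤ))) := by
        refine Hd2.congr fun x => ?_
        simp only [Function.comp_apply, Equiv.neg_apply]
        rw [hdabs x]
      exact (Equiv.neg (ℤ × ℤ)).summable_iff.1 h10
    have SB : Summable fun x : ℤ × ℤ => ‖a (nm - x)‖ ^ 2 := by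
      have h11 : Summable ((fun x : ℤ × ℤ => ‖a x‖ ^ 2) ∘ (Equiv.subLeft nm)) :=
        (Equiv.subLeft nm).summable_iff.2 SA
      refine h11.congr fun x => ?_
      simp only [Function.comp_apply, Equiv.subLeft_apply]
    have Sabs : Summable fun x : ℤ × ℤ =>
        ‖a x * a (nm - x) * twFac q α β r s x (nm - x)‖ := by
      refine Summable.of_nonneg_of_le (fun x => norm_nonneg _) (fun x => ?_)
        ((SA.add SB).div_const 2)
      rw [norm_mul, norm_mul, Aux.twFac_abs, mul_one]
      have h12 := two_mul_le_add_sq (‖a x‖) (‖a (nm - x)‖)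
      linarith
    refine ⟨Sabs, ?_⟩
    -- the twisted convolution identity
    have hfL2 : MemL2q q (gpi q α β r s nm h) := Aux.memL2q_gpi q h hhL2 nm
    have H1 : HasSum (fun x : ℤ × ℤ => ipq q (gpi q α β r s nm h) (gpi q α β r s x g) • vH x)
        (Aux.toH q (gpi q α β r s nm h) hfL2) :=
      Aux.hasSum_of_dual q α β r s g h hhL2 hdual (gpi q α β r s nm h) hfL2
    have H2 := H1.mapL (innerSL ℂ Tg)
    have H3 := H2.star
    have e3 : (fun x : ℤ × ℤ => star ((innerSL ℂ Tg)
          (ipq q (gpi q α β r s nm h) (gpi q α β r s x g) • vH x)))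
        = fun x : ℤ × ℤ => a x * a (nm - x) * twFac q α β r s x (nm - x) := by
      funext x
      rw [innerSL_apply_apply, inner_smul_right]
      show (starRingEnd ℂ) _ = _
      rw [map_mul]
      rw [show inner ℂ Tg (vH x) = ipq q (gpi q α β r s x h) g from Aux.inner_toH q _ g _ hgL2]
      rw [Aux.ipq_conj q (gpi q α β r s nm h) (gpi q α β r s x g),
        Aux.ipq_conj q (gpi q α β r s x h) g]
      rw [Aux.ipq_gpi_gpi, ← ha, ← ha]
      ring
    have e4 : star ((innerSL ℂ Tg) (Aux.toH q (gpi q α β r s nm h) hfL2)) = a nm := by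
      rw [innerSL_apply_apply]
      show (starRingEnd ℂ) _ = _
      rw [show inner ℂ Tg (Aux.toH q (gpi q α β r s nm h) hfL2)
          = ipq q (gpi q α β r s nm h) g from Aux.inner_toH q _ g _ hgL2]
      rw [Aux.ipq_conj, ← ha]
    rw [e3, e4] at H3
    rw [twConv]
    exact H3.tsum_eq


end
end

section
/- Let g ∈ M¹_0(ℝ×ℤ_q) generate a Gabor frame with frame operator S_g, and let h = S_g⁻¹ g. Then the sequence a : ℤ² → ℂ defined by a(n,m) = ⟨g, π_{n,m} h⟩ is a projection for the twisted convolution and involution: a ♮ a = a and a* = a, i.e. for every (n,m) ∈ ℤ², ∑_{(n',m')∈ℤ²} a(n',m')·a(n−n', m−m')·e^{−2πi(αn'·β(m−m') + rn'·s(m−m')/q)} = a(n,m) (absolutely convergent), and e^{−2πi(αn·βm + rn·sm/q)}·conj(a(−n,−m)) = a(n,m). -/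
open MeasureTheory Complex Real Filter Finset

noncomputable section

namespace S5

variable (q : ℕ) [NeZero q] (α β : ℝ) (r s : ℕ)

lemma exp_mul_conj_exp (z : ℂ) (hz : (starRingEnd ℂ) z = -z) :
    Complex.exp z * (starRingEnd ℂ) (Complex.exp z) = 1 := by
  rw [← Complex.exp_conj, hz, ← Complex.exp_add, add_neg_cancel, Complex.exp_zero]

lemma zchar_int (k : ℤ) :
    zchar q ((k : ZMod q)) = Complex.exp (2 * (Real.pi : ℂ) * Complex.I * (k : ℂ) / (q : ℂ)) := by
  have hq : (q : ℂ) ≠ 0 := Nat.cast_ne_zero.mpr (NeZero.ne q)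
  unfold zchar
  refine Complex.exp_eq_exp_iff_exists_int.mpr ⟨-(k / (q : ℤ)), ?_⟩
  have hv0 : (((k : ZMod q)).val : ℤ) = k % (q : ℤ) := ZMod.val_intCast k
  have hv : (((k : ZMod q)).val : ℂ) = ((k % (q : ℤ) : ℤ) : ℂ) := by
    exact_mod_cast congrArg (fun z : ℤ => (z : ℂ)) hv0
  rw [hv]
  have hd : ((k % (q : ℤ) : ℤ) : ℂ) = (k : ℂ) - (q : ℂ) * ((k / (q : ℤ) : ℤ) : ℂ) := by
    have h2 := Int.emod_def k (q : ℤ)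
    exact_mod_cast congrArg (fun z : ℤ => (z : ℂ)) h2
  rw [hd]
  push_cast
  field_simp
  ring

lemma gpi_zero (f : ℝ × ZMod q → ℂ) : gpi q α β r s 0 f = f := by
  funext p
  simp [gpi, Msh, Tsh, zchar, ZMod.val_zero]

lemma twFac_conj (x y : ℤ × ℤ) :
    (starRingEnd ℂ) (twFac q α β r s x y) = twFac q α β r s (-x) y := by
  unfold twFac
  rw [← Complex.exp_conj]
  congr 1
  simp only [map_neg, map_mul, map_ofNat, Complex.conj_ofReal, Complex.conj_I]
  push_cast [Prod.fst_neg]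
  ring

lemma twFac_neg_neg (x : ℤ × ℤ) : twFac q α β r s (-x) (-x) = twFac q α β r s x x := by
  unfold twFac
  congr 1
  push_cast [Prod.fst_neg, Prod.snd_neg]
  ring

lemma twFac_mul₁ (x y : ℤ × ℤ) :
    twFac q α β r s (-x) x * twFac q α β r s x y = twFac q α β r s x (y - x) := by
  unfold twFac
  rw [← Complex.exp_add]
  congr 1
  push_cast [Prod.fst_neg, Prod.snd_sub]
  ring

lemma twFac_combine (x w : ℤ × ℤ) :
    twFac q α β r s x x * (twFac q α β r s (x - w) (w - x) * twFac q α β r s (x - w) (-w) *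
      (twFac q α β r s w (-w))) = twFac q α β r s w (x - w) := by
  unfold twFac
  rw [← Complex.exp_add, ← Complex.exp_add, ← Complex.exp_add]
  congr 1
  push_cast [Prod.fst_sub, Prod.snd_sub, Prod.fst_neg, Prod.snd_neg]
  ring

private lemma exp_arrange {A B C D E' F' G' X : ℂ} (h : A + B + (C + D) = E' + (F' + G')) :
    Complex.exp A * Complex.exp B * (Complex.exp C * Complex.exp D * X) =
      Complex.exp E' * (Complex.exp F' * Complex.exp G' * X) := by
  have l : Complex.exp A * Complex.exp B * (Complex.exp C * Complex.exp D) =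
      Complex.exp E' * (Complex.exp F' * Complex.exp G') := by
    rw [← Complex.exp_add, ← Complex.exp_add, ← Complex.exp_add, ← Complex.exp_add, ← Complex.exp_add, h]
  linear_combination X * l

lemma gpi_comp (x y : ℤ × ℤ) (f : ℝ × ZMod q → ℂ) :
    gpi q α β r s x (gpi q α β r s y f) =
      fun p => twFac q α β r s x y * gpi q α β r s (x + y) f p := by
  have hq : (q : ℂ) ≠ 0 := Nat.cast_ne_zero.mpr (NeZero.ne q)
  funext p
  obtain ⟨t, c⟩ := p
  set j : ℤ := (c.val : ℤ) with hjdef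
  have hj : ((j : ℤ) : ZMod q) = c := by
    rw [hjdef]; push_cast; exact ZMod.natCast_rightInverse c
  simp only [gpi, Msh, Tsh, twFac, Prod.fst_add, Prod.snd_add]
  have harg : (t - α * (x.1 : ℝ) - α * (y.1 : ℝ),
      c - (r : ZMod q) * (x.1 : ZMod q) - (r : ZMod q) * (y.1 : ZMod q)) =
      (t - α * ((x.1 + y.1 : ℤ) : ℝ), c - (r : ZMod q) * ((x.1 + y.1 : ℤ) : ZMod q)) := by
    simp only [Prod.mk.injEq]
    constructor
    · push_cast; ring
    · push_cast; ring
  rw [harg]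
  have hz1 : zchar q (c * ((s : ZMod q) * (x.2 : ZMod q))) =
      Complex.exp (2 * (Real.pi : ℂ) * Complex.I * ((j * ((s : ℤ) * x.2) : ℤ) : ℂ) / (q : ℂ)) := by
    rw [← zchar_int q (j * ((s : ℤ) * x.2))]
    congr 1
    rw [← hj]; push_cast; ring
  have hz2 : zchar q ((c - (r : ZMod q) * (x.1 : ZMod q)) * ((s : ZMod q) * (y.2 : ZMod q))) =
      Complex.exp (2 * (Real.pi : ℂ) * Complex.I * (((j - (r : ℤ) * x.1) * ((s : ℤ) * y.2) : ℤ) : ℂ) / (q : ℂ)) := by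
    rw [← zchar_int q ((j - (r : ℤ) * x.1) * ((s : ℤ) * y.2))]
    congr 1
    rw [← hj]; push_cast; ring
  have hz3 : zchar q (c * ((s : ZMod q) * ((x.2 + y.2 : ℤ) : ZMod q))) =
      Complex.exp (2 * (Real.pi : ℂ) * Complex.I * ((j * ((s : ℤ) * (x.2 + y.2)) : ℤ) : ℂ) / (q : ℂ)) := by
    rw [← zchar_int q (j * ((s : ℤ) * (x.2 + y.2)))]
    congr 1
    rw [← hj]; push_cast; ring
  rw [hz1, hz2, hz3]
  refine exp_arrange ?_
  push_cast
  field_simp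
  ring

lemma ipq_conj (f u : ℝ × ZMod q → ℂ) : (starRingEnd ℂ) (ipq q f u) = ipq q u f := by
  unfold ipq
  rw [map_sum]
  refine Finset.sum_congr rfl fun k _ => ?_
  rw [← integral_conj]
  refine integral_congr_ae (Filter.Eventually.of_forall fun t => ?_)
  simp only [map_mul, Complex.conj_conj]
  ring

lemma ipq_const_left (c : ℂ) (f u : ℝ × ZMod q → ℂ) :
    ipq q (fun p => c * f p) u = c * ipq q f u := by
  unfold ipq
  rw [Finset.mul_sum]
  refine Finset.sum_congr rfl fun k _ => ?_
  rw [← integral_const_mul]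
  refine integral_congr_ae (Filter.Eventually.of_forall fun t => ?_)
  ring

lemma ipq_const_right (c : ℂ) (f u : ℝ × ZMod q → ℂ) :
    ipq q f (fun p => c * u p) = (starRingEnd ℂ) c * ipq q f u := by
  unfold ipq
  rw [Finset.mul_sum]
  refine Finset.sum_congr rfl fun k _ => ?_
  rw [← integral_const_mul]
  refine integral_congr_ae (Filter.Eventually.of_forall fun t => ?_)
  simp only [map_mul]
  ring

lemma ipq_unit (x : ℤ × ℤ) (f u : ℝ × ZMod q → ℂ) :
    ipq q (gpi q α β r s x f) (gpi q α β r s x u) = ipq q f u := by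
  unfold ipq
  have hpt : ∀ (k : ZMod q) (t : ℝ),
      gpi q α β r s x f (t, k) * (starRingEnd ℂ) (gpi q α β r s x u (t, k)) =
      f (t - α * (x.1 : ℝ), k - (r : ZMod q) * (x.1 : ZMod q)) *
        (starRingEnd ℂ) (u (t - α * (x.1 : ℝ), k - (r : ZMod q) * (x.1 : ZMod q))) := by
    intro k t
    simp only [gpi, Msh, Tsh, map_mul]
    have hE : Complex.exp (2 * (Real.pi : ℂ) * Complex.I * (t : ℂ) * ((β * (x.2 : ℝ) : ℝ) : ℂ)) *
        (starRingEnd ℂ) (Complex.exp (2 * (Real.pi : ℂ) * Complex.I * (t : ℂ) * ((β * (x.2 : ℝ) : ℝ) : ℂ))) = 1 := by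
      refine exp_mul_conj_exp _ ?_
      simp only [map_mul, map_ofNat, Complex.conj_ofReal, Complex.conj_I]
      ring
    have hZ : zchar q (k * ((s : ZMod q) * (x.2 : ZMod q))) *
        (starRingEnd ℂ) (zchar q (k * ((s : ZMod q) * (x.2 : ZMod q)))) = 1 := by
      unfold zchar
      refine exp_mul_conj_exp _ ?_
      simp only [map_div₀, map_mul, map_ofNat, Complex.conj_ofReal, Complex.conj_I,
        Complex.conj_natCast]
      ring
    linear_combination (f (t - α * (x.1 : ℝ), k - (r : ZMod q) * (x.1 : ZMod q)) *
      (starRingEnd ℂ) (u (t - α * (x.1 : ℝ), k - (r : ZMod q) * (x.1 : ZMod q))) *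
      (zchar q (k * ((s : ZMod q) * (x.2 : ZMod q))) *
        (starRingEnd ℂ) (zchar q (k * ((s : ZMod q) * (x.2 : ZMod q)))))) * hE +
      (f (t - α * (x.1 : ℝ), k - (r : ZMod q) * (x.1 : ZMod q)) *
      (starRingEnd ℂ) (u (t - α * (x.1 : ℝ), k - (r : ZMod q) * (x.1 : ZMod q)))) * hZ
  calc (∑ k : ZMod q, ∫ t : ℝ, gpi q α β r s x f (t, k) * (starRingEnd ℂ) (gpi q α β r s x u (t, k)))
      = ∑ k : ZMod q, ∫ t : ℝ, f (t, k - (r : ZMod q) * (x.1 : ZMod q)) *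
          (starRingEnd ℂ) (u (t, k - (r : ZMod q) * (x.1 : ZMod q))) := by
        refine Finset.sum_congr rfl fun k _ => ?_
        have hshift := MeasureTheory.integral_sub_right_eq_self (μ := (volume : Measure ℝ))
          (fun t : ℝ => f (t, k - (r : ZMod q) * (x.1 : ZMod q)) *
            (starRingEnd ℂ) (u (t, k - (r : ZMod q) * (x.1 : ZMod q)))) (α * (x.1 : ℝ))
        rw [← hshift]
        exact integral_congr_ae (Filter.Eventually.of_forall fun t => hpt k t)
    _ = ∑ k : ZMod q, ∫ t : ℝ, f (t, k) * (starRingEnd ℂ) (u (t, k)) :=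
        Equiv.sum_comp (Equiv.subRight ((r : ZMod q) * (x.1 : ZMod q)))
          (fun k => ∫ t : ℝ, f (t, k) * (starRingEnd ℂ) (u (t, k)))

lemma ipq_comm (x y : ℤ × ℤ) (f₁ f₂ : ℝ × ZMod q → ℂ) :
    ipq q (gpi q α β r s x f₁) (gpi q α β r s y f₂) =
      twFac q α β r s x (y - x) * ipq q f₁ (gpi q α β r s (y - x) f₂) := by
  have h1 := ipq_unit q α β r s (-x) (gpi q α β r s x f₁) (gpi q α β r s y f₂)
  rw [← h1, gpi_comp, gpi_comp, ipq_const_left, ipq_const_right, neg_add_cancel,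
    gpi_zero, twFac_conj, neg_neg, neg_add_eq_sub]
  linear_combination (ipq q f₁ (gpi q α β r s (y - x) f₂)) * twFac_mul₁ q α β r s x y

lemma memL2q_gpi (x : ℤ × ℤ) (h : ℝ × ZMod q → ℂ) (hh : MemL2q q h) :
    MemL2q q (gpi q α β r s x h) := by
  intro k
  have base : MemLp ((fun t : ℝ => h (t, k - (r : ZMod q) * (x.1 : ZMod q))) ∘
      (fun t : ℝ => t - α * (x.1 : ℝ))) 2 (volume : Measure ℝ) :=
    (hh (k - (r : ZMod q) * (x.1 : ZMod q))).comp_measurePreserving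
      (measurePreserving_sub_right volume (α * (x.1 : ℝ)))
  have base' : MemLp (fun t : ℝ => h (t - α * (x.1 : ℝ), k - (r : ZMod q) * (x.1 : ZMod q))) 2
      (volume : Measure ℝ) := base
  have hEcont : Continuous fun t : ℝ =>
      Complex.exp (2 * (Real.pi : ℂ) * Complex.I * (t : ℂ) * ((β * (x.2 : ℝ) : ℝ) : ℂ)) :=
    Complex.continuous_exp.comp
      (((continuous_const.mul Complex.continuous_ofReal).mul continuous_const))
  have hmeas : AEStronglyMeasurable (fun t : ℝ => gpi q α β r s x h (t, k)) volume := by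
    simp only [gpi, Msh, Tsh]
    exact (hEcont.aestronglyMeasurable.mul aestronglyMeasurable_const).mul
      base'.aestronglyMeasurable
  refine MemLp.of_le base' hmeas (Filter.Eventually.of_forall fun t => ?_)
  simp only [gpi, Msh, Tsh, norm_mul]
  have h1 : ‖Complex.exp (2 * (Real.pi : ℂ) * Complex.I * (t : ℂ) * ((β * (x.2 : ℝ) : ℝ) : ℂ))‖ = 1 := by
    rw [show (2 * (Real.pi : ℂ) * Complex.I * (t : ℂ) * ((β * (x.2 : ℝ) : ℝ) : ℂ)) =
      (((2 * Real.pi * t * (β * (x.2 : ℝ)) : ℝ)) : ℂ) * Complex.I by push_cast; ring,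
      Complex.norm_exp_ofReal_mul_I]
  have h2 : ‖zchar q (k * ((s : ZMod q) * (x.2 : ZMod q)))‖ = 1 := by
    unfold zchar
    rw [show (2 * (Real.pi : ℂ) * Complex.I *
        (((k * ((s : ZMod q) * (x.2 : ZMod q))).val : ℕ) : ℂ) / (q : ℂ)) =
      (((2 * Real.pi * ((k * ((s : ZMod q) * (x.2 : ZMod q))).val : ℕ) / (q : ℕ) : ℝ)) : ℂ) *
        Complex.I by push_cast; ring, Complex.norm_exp_ofReal_mul_I]
  rw [h1, h2, one_mul, one_mul]

end S5

/-- for a Gabor frame generator `g` with canonical dual `h = S_g⁻¹g`, the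
sequence `a(n,m) = ⟨g, π_{n,m}h⟩` is a projection for the twisted convolution and
involution. -/
theorem statement5 (q : ℕ) [NeZero q] (α β : ℝ) (hα : α ≠ 0) (hβ : β ≠ 0)
    (r s : ℕ) (hr : r < q) (hs : s < q) (hrq : Nat.Coprime r q) (hsq : Nat.Coprime s q)
    (g : ℝ × ZMod q → ℂ) (hg : MemM1q q 0 g) (hframe : IsGaborFrame q α β r s g)
    (h : ℝ × ZMod q → ℂ) (hhL2 : MemL2q q h) (hcanon : SgApplyEq q α β r s g h g)
    (a : ℤ × ℤ → ℂ) (ha : ∀ nm : ℤ × ℤ, a nm = ipq q g (gpi q α β r s nm h)) :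
    (∀ nm : ℤ × ℤ,
      Summable (fun x : ℤ × ℤ =>
        ‖a x * a (nm - x) * twFac q α β r s x (nm - x)‖) ∧
      twConv q α β r s a a nm = a nm) ∧
    (∀ nm : ℤ × ℤ, twFac q α β r s nm nm * (starRingEnd ℂ) (a (-nm)) = a nm) := by
  classical
  have hL2 : ∀ x : ℤ × ℤ, MemL2q q (gpi q α β r s x h) :=
    fun x => S5.memL2q_gpi q α β r s x h hhL2
  have hsum : ∀ x : ℤ × ℤ, Summable fun w : ℤ × ℤ =>
      ipq q h (gpi q α β r s w g) * ipq q (gpi q α β r s w g) (gpi q α β r s x h) :=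
    fun x => (hcanon _ (hL2 x)).1
  have hval : ∀ x : ℤ × ℤ, (∑' w : ℤ × ℤ,
      ipq q h (gpi q α β r s w g) * ipq q (gpi q α β r s w g) (gpi q α β r s x h)) =
      ipq q g (gpi q α β r s x h) := fun x => (hcanon _ (hL2 x)).2
  have hBA : ∀ z : ℤ × ℤ, ipq q h (gpi q α β r s z g) =
      twFac q α β r s z z * (starRingEnd ℂ) (ipq q g (gpi q α β r s (-z) h)) := by
    intro z
    have h0 : ipq q (gpi q α β r s z g) h =
        twFac q α β r s z (-z) * ipq q g (gpi q α β r s (-z) h) := by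
      conv_lhs => rw [show h = gpi q α β r s 0 h from (S5.gpi_zero q α β r s h).symm]
      rw [S5.ipq_comm, zero_sub]
    rw [← S5.ipq_conj q (gpi q α β r s z g) h, h0, map_mul, S5.twFac_conj, S5.twFac_neg_neg]
  have hAB' : ∀ z : ℤ × ℤ, ipq q g (gpi q α β r s z h) =
      twFac q α β r s z z * (starRingEnd ℂ) (ipq q h (gpi q α β r s (-z) g)) := by
    intro z
    have h0 : ipq q (gpi q α β r s z h) g =
        twFac q α β r s z (-z) * ipq q h (gpi q α β r s (-z) g) := by
      conv_lhs => rw [show g = gpi q α β r s 0 g from (S5.gpi_zero q α β r s g).symm]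
      rw [S5.ipq_comm, zero_sub]
    rw [← S5.ipq_conj q (gpi q α β r s z h) g, h0, map_mul, S5.twFac_conj, S5.twFac_neg_neg]
  have hcB : ∀ z : ℤ × ℤ, (starRingEnd ℂ) (ipq q h (gpi q α β r s z g)) =
      twFac q α β r s (-z) z * ipq q g (gpi q α β r s (-z) h) := by
    intro z
    rw [hBA z, map_mul, S5.twFac_conj, Complex.conj_conj]
  have hcA : ∀ z : ℤ × ℤ, (starRingEnd ℂ) (ipq q g (gpi q α β r s z h)) =
      twFac q α β r s (-z) z * ipq q h (gpi q α β r s (-z) g) := by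
    intro z
    rw [hAB' z, map_mul, S5.twFac_conj, Complex.conj_conj]
  have hterm : ∀ x w : ℤ × ℤ,
      ipq q h (gpi q α β r s w g) * ipq q (gpi q α β r s w g) (gpi q α β r s x h) =
      twFac q α β r s x x * (starRingEnd ℂ)
        (ipq q h (gpi q α β r s (w - x) g) *
          ipq q (gpi q α β r s (w - x) g) (gpi q α β r s (-x) h)) := by
    intro x w
    rw [S5.ipq_comm, S5.ipq_comm, show -x - (w - x) = -w from by abel, map_mul, map_mul,
      hcB (w - x), hcA (-w), S5.twFac_conj, neg_neg, neg_sub]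
    linear_combination (-(ipq q g (gpi q α β r s (x - w) h) * ipq q h (gpi q α β r s w g))) *
      S5.twFac_combine q α β r s x w
  have hAB : ∀ x : ℤ × ℤ, ipq q g (gpi q α β r s x h) = ipq q h (gpi q α β r s x g) := by
    intro x
    calc ipq q g (gpi q α β r s x h)
        = ∑' w : ℤ × ℤ, ipq q h (gpi q α β r s w g) *
            ipq q (gpi q α β r s w g) (gpi q α β r s x h) := (hval x).symm
      _ = ∑' w : ℤ × ℤ, twFac q α β r s x x * (starRingEnd ℂ)
            (ipq q h (gpi q α β r s (w - x) g) *
              ipq q (gpi q α β r s (w - x) g) (gpi q α β r s (-x) h)) :=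
          tsum_congr fun w => hterm x w
      _ = ∑' w : ℤ × ℤ, twFac q α β r s x x * (starRingEnd ℂ)
            (ipq q h (gpi q α β r s w g) *
              ipq q (gpi q α β r s w g) (gpi q α β r s (-x) h)) :=
          (Equiv.subRight x).tsum_eq fun w => twFac q α β r s x x * (starRingEnd ℂ)
            (ipq q h (gpi q α β r s w g) *
              ipq q (gpi q α β r s w g) (gpi q α β r s (-x) h))
      _ = twFac q α β r s x x * ∑' w : ℤ × ℤ, (starRingEnd ℂ)
            (ipq q h (gpi q α β r s w g) *
              ipq q (gpi q α β r s w g) (gpi q α β r s (-x) h)) := tsum_mul_left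
      _ = twFac q α β r s x x * (starRingEnd ℂ) (∑' w : ℤ × ℤ,
            ipq q h (gpi q α β r s w g) *
              ipq q (gpi q α β r s w g) (gpi q α β r s (-x) h)) := by
          congr 1
          simp only [starRingEnd_apply]
          exact tsum_star.symm
      _ = twFac q α β r s x x * (starRingEnd ℂ) (ipq q g (gpi q α β r s (-x) h)) := by
          rw [hval (-x)]
      _ = ipq q h (gpi q α β r s x g) := (hBA x).symm
  refine ⟨fun nm => ?_, fun nm => ?_⟩
  · have hfun : (fun w : ℤ × ℤ => a w * a (nm - w) * twFac q α β r s w (nm - w)) =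
        fun w : ℤ × ℤ => ipq q h (gpi q α β r s w g) *
          ipq q (gpi q α β r s w g) (gpi q α β r s nm h) := by
      funext w
      rw [S5.ipq_comm, ha w, ha (nm - w), hAB w]
      ring
    constructor
    · have h1 : Summable fun w : ℤ × ℤ =>
          a w * a (nm - w) * twFac q α β r s w (nm - w) := by
        rw [hfun]; exact hsum nm
      exact h1.norm
    · simp only [twConv]
      rw [hfun, hval nm]
      exact (ha nm).symm
  · rw [ha (-nm), ha nm]
    exact (hBA nm).symm.trans (hAB nm).symm

end
end

section
/- Let p : ℤ² → ℂ satisfy ∑_{(n,m)∈ℤ²} |p(n,m)|·(1+|αn|+|βm|) < ∞, p ♮ p = p, and p* = p. Then the energy E(p) = (1/(4π·|αβ|))·[(∂₁p ♮ ∂₁p) + (∂₂p ♮ ∂₂p)](0,0) is a nonnegative real number and E(p) ≥ |c₁(p)|, where c₁(p) = (1/(2πi·|αβ|))·[p ♮ ((∂₁p ♮ ∂₂p) − (∂₂p ♮ ∂₁p))](0,0). -/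
open MeasureTheory Complex Real Filter Finset

noncomputable section

set_option maxHeartbeats 1000000

section
namespace St10
open Complex

/-- `e^{it}`. -/
def ez (t : ℝ) : ℂ := Complex.exp ((t : ℂ) * Complex.I)

lemma ez_mul_ez (s t : ℝ) : ez s * ez t = ez (s + t) := by
  simp [ez, ← Complex.exp_add]; ring_nf

lemma ez_zero : ez 0 = 1 := by simp [ez]

lemma norm_ez (t : ℝ) : ‖ez t‖ = 1 := Complex.norm_exp_ofReal_mul_I t

lemma conj_ez (t : ℝ) : (starRingEnd ℂ) (ez t) = ez (-t) := by
  simp [ez, ← Complex.exp_conj]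

/-- The phase exponent. -/
def th (κ : ℝ) (x y : ℤ × ℤ) : ℝ := -(2 * Real.pi * (κ * x.1 * y.2))

/-- Twisted convolution. -/
def mulk (κ : ℝ) (a b : ℤ × ℤ → ℂ) (x : ℤ × ℤ) : ℂ :=
  ∑' y : ℤ × ℤ, a y * b (x - y) * ez (th κ y (x - y))

/-- Trace of a product of two. -/
def T2 (κ : ℝ) (a b : ℤ × ℤ → ℂ) : ℂ := mulk κ a b 0

/-- Trace of a product of three. -/
def T3 (κ : ℝ) (a b c : ℤ × ℤ → ℂ) : ℂ :=
  ∑' z : (ℤ × ℤ) × (ℤ × ℤ), a z.1 * b z.2 * c (-(z.1 + z.2)) *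
    ez (th κ z.1 z.2 + th κ z.1 (-(z.1 + z.2)) + th κ z.2 (-(z.1 + z.2)))

/-- Involution. -/
def stk (κ : ℝ) (a : ℤ × ℤ → ℂ) (x : ℤ × ℤ) : ℂ :=
  ez (th κ x x) * (starRingEnd ℂ) (a (-x))

/-- ℓ¹ membership. -/
def L1 (a : ℤ × ℤ → ℂ) : Prop := Summable (fun x => ‖a x‖)

lemma L1.bound {a : ℤ × ℤ → ℂ} (ha : L1 a) (x : ℤ × ℤ) : ‖a x‖ ≤ ∑' y, ‖a y‖ :=
  ha.le_tsum x (fun _ _ => norm_nonneg _)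

lemma l1_tsum_nonneg (a : ℤ × ℤ → ℂ) : 0 ≤ ∑' y, ‖a y‖ :=
  tsum_nonneg (fun _ => norm_nonneg _)


section Summ
variable {κ : ℝ} {a b c a' b' : ℤ × ℤ → ℂ}

/-- Summability of the defining series of `mulk` at each point. -/
lemma summable_term (ha : L1 a) (hb : L1 b) (x : ℤ × ℤ) :
    Summable (fun y : ℤ × ℤ => a y * b (x - y) * ez (th κ y (x - y))) := by
  apply Summable.of_norm
  apply Summable.of_nonneg_of_le (fun y => norm_nonneg _) _ (ha.mul_right (∑' z, ‖b z‖))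
  intro y
  rw [norm_mul, norm_mul, norm_ez, mul_one]
  exact mul_le_mul_of_nonneg_left (hb.bound _) (norm_nonneg _)

/-- Summability over pairs with unit twist. -/
lemma summable_pair (ha : L1 a) (hb : L1 b) (hc : L1 c)
    (g : (ℤ × ℤ) × (ℤ × ℤ) → ℤ × ℤ) (w : (ℤ × ℤ) × (ℤ × ℤ) → ℂ) (hw : ∀ z, ‖w z‖ = 1) :
    Summable (fun z : (ℤ × ℤ) × (ℤ × ℤ) => a z.1 * b z.2 * c (g z) * w z) := by
  apply Summable.of_norm
  have hs : Summable (fun z : (ℤ × ℤ) × (ℤ × ℤ) => ‖a z.1‖ * (‖b z.2‖ * (∑' y, ‖c y‖))) :=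
    ha.mul_of_nonneg (hb.mul_right _) (fun _ => norm_nonneg _)
      (fun y => mul_nonneg (norm_nonneg _) (l1_tsum_nonneg c))
  apply Summable.of_nonneg_of_le (fun z => norm_nonneg _) _ hs
  intro z
  rw [norm_mul, norm_mul, norm_mul, hw, mul_one, mul_assoc]
  refine mul_le_mul_of_nonneg_left ?_ (norm_nonneg _)
  exact mul_le_mul_of_nonneg_left (hc.bound _) (norm_nonneg _)

/-- A summable-on-product family has summable fiberwise sums. -/
lemma summable_fiber {M : Type*} [AddCommGroup M] [UniformSpace M] [IsUniformAddGroup M]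
    [CompleteSpace M] [T3Space M] {H : (ℤ × ℤ) × (ℤ × ℤ) → M} (h : Summable H) :
    Summable (fun x : ℤ × ℤ => ∑' y : ℤ × ℤ, H (x, y)) :=
  (h.hasSum.prod_fiberwise (fun x => (h.prod_factor x).hasSum)).summable

lemma norm_mulk_le (ha : L1 a) (hb : L1 b) (x : ℤ × ℤ) :
    ‖mulk κ a b x‖ ≤ ∑' y : ℤ × ℤ, ‖a y‖ * ‖b (x - y)‖ := by
  refine le_trans (norm_tsum_le_tsum_norm ((summable_term ha hb x).norm)) ?_
  refine Summable.tsum_le_tsum (fun y => ?_) (summable_term ha hb x).norm ?_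
  · rw [norm_mul, norm_mul, norm_ez, mul_one]
  · apply Summable.of_nonneg_of_le (fun y => mul_nonneg (norm_nonneg _) (norm_nonneg _))
      (fun y => mul_le_mul_of_nonneg_left (hb.bound _) (norm_nonneg _)) (ha.mul_right _)

lemma l1_mulk (ha : L1 a) (hb : L1 b) : L1 (mulk κ a b) := by
  have hprod : Summable (fun z : (ℤ × ℤ) × (ℤ × ℤ) => ‖a z.2‖ * ‖b (z.1 - z.2)‖) := by
    have h0 : Summable (fun z : (ℤ × ℤ) × (ℤ × ℤ) => ‖a z.1‖ * ‖b z.2‖) :=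
      ha.mul_of_nonneg hb (fun _ => norm_nonneg _) (fun _ => norm_nonneg _)
    have hinj : Function.Injective (fun z : (ℤ × ℤ) × (ℤ × ℤ) => ((z.2, z.1 - z.2) : (ℤ × ℤ) × (ℤ × ℤ))) := by
      intro z w h
      simp only [Prod.mk.injEq] at h
      obtain ⟨h1, h2⟩ := h
      rw [h1] at h2
      exact Prod.ext (sub_left_inj.mp h2) h1
    have h2 := h0.comp_injective hinj
    simpa [Function.comp_def] using h2
  apply Summable.of_nonneg_of_le (fun x => norm_nonneg _) (norm_mulk_le ha hb)
  exact summable_fiber hprod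

lemma l1_stk (ha : L1 a) : L1 (stk κ a) := by
  have : (fun x => ‖stk κ a x‖) = fun x => ‖a (-x)‖ := by
    funext x
    rw [St10.stk, norm_mul, norm_ez, one_mul, RCLike.norm_conj]
  rw [L1, this]
  exact (Equiv.neg (ℤ × ℤ)).summable_iff.mpr ha

end Summ

section Core
variable {κ : ℝ} {a b c a' b' : ℤ × ℤ → ℂ}

lemma mul_ez_arrange (u v w : ℂ) (A B : ℝ) :
    u * (v * w * ez A) * ez B = u * v * w * ez (A + B) := by
  rw [← ez_mul_ez]; ring

lemma arrange2 (u v w : ℂ) (A B : ℝ) :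
    u * v * ez A * w * ez B = u * v * w * ez (A + B) := by
  rw [← ez_mul_ez]; ring

lemma norm_ez_mul_ez (A B : ℝ) : ‖ez A * ez B‖ = 1 := by
  rw [norm_mul, norm_ez, norm_ez, mul_one]

lemma th_snd (x : ℤ × ℤ) (u v : ℤ) : th κ x (u, v) = -(2 * Real.pi * (κ * x.1 * v)) := rfl

lemma T2_mul_right (ha : L1 a) (hb : L1 b) (hc : L1 c) :
    T2 κ a (mulk κ b c) = T3 κ a b c := by
  rw [T2, T3, mulk]
  have step1 : ∀ x : ℤ × ℤ, a x * mulk κ b c (0 - x) * ez (th κ x (0 - x)) =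
      ∑' y : ℤ × ℤ, a x * (b y * c (0 - x - y) * ez (th κ y (0 - x - y))) * ez (th κ x (0 - x)) := by
    intro x
    rw [mulk, ← tsum_mul_left, ← tsum_mul_right]
  rw [tsum_congr step1]
  have hF : Summable (fun z : (ℤ × ℤ) × (ℤ × ℤ) =>
      a z.1 * (b z.2 * c (0 - z.1 - z.2) * ez (th κ z.2 (0 - z.1 - z.2))) * ez (th κ z.1 (0 - z.1))) := by
    refine (summable_pair ha hb hc (fun z => 0 - z.1 - z.2)
      (fun z => ez (th κ z.2 (0 - z.1 - z.2)) * ez (th κ z.1 (0 - z.1)))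
      (fun z => norm_ez_mul_ez _ _)).congr (fun z => by ring)
  rw [← Summable.tsum_prod' hF (fun x => hF.prod_factor x)]
  refine tsum_congr (fun z => ?_)
  obtain ⟨x, y⟩ := z
  show a x * (b y * c (0 - x - y) * ez (th κ y (0 - x - y))) * ez (th κ x (0 - x)) = _
  rw [mul_ez_arrange]
  have e1 : (0 : ℤ × ℤ) - x - y = -(x + y) := by abel
  rw [e1]
  have e2 : (0 : ℤ × ℤ) - x = -x := by abel
  rw [e2]
  congr 2
  simp only [th, Prod.fst_add, Prod.snd_add, Prod.fst_neg, Prod.snd_neg]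
  push_cast
  ring



variable {κ : ℝ} {a b c a' b' : ℤ × ℤ → ℂ}

lemma summable_pairg (ha : L1 a) (hb : L1 b) (hc : L1 c)
    (g1 g2 g3 : (ℤ × ℤ) × (ℤ × ℤ) → ℤ × ℤ) (w : (ℤ × ℤ) × (ℤ × ℤ) → ℂ)
    (hw : ∀ z, ‖w z‖ = 1)
    (hinj : Function.Injective (fun z : (ℤ × ℤ) × (ℤ × ℤ) => (g1 z, g2 z))) :
    Summable (fun z : (ℤ × ℤ) × (ℤ × ℤ) => a (g1 z) * b (g2 z) * c (g3 z) * w z) := by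
  have h0 : Summable (fun z : (ℤ × ℤ) × (ℤ × ℤ) => ‖a z.1‖ * ‖b z.2‖) :=
    ha.mul_of_nonneg hb (fun _ => norm_nonneg _) (fun _ => norm_nonneg _)
  have h1 : Summable (fun z : (ℤ × ℤ) × (ℤ × ℤ) => ‖a (g1 z)‖ * ‖b (g2 z)‖) := by
    have h2 := h0.comp_injective hinj
    simpa [Function.comp_def] using h2
  apply Summable.of_norm
  apply Summable.of_nonneg_of_le (fun z => norm_nonneg _) _ (h1.mul_right (∑' y, ‖c y‖))
  intro z
  rw [norm_mul, norm_mul, norm_mul, hw, mul_one, mul_assoc, mul_assoc]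
  refine mul_le_mul_of_nonneg_left ?_ (norm_nonneg _)
  refine mul_le_mul_of_nonneg_left (hc.bound _) (norm_nonneg _)

/-- The shear `(u,v) ↦ (u+v, u)`. -/
def shearE : ((ℤ × ℤ) × (ℤ × ℤ)) ≃ ((ℤ × ℤ) × (ℤ × ℤ)) where
  toFun z := (z.1 + z.2, z.1)
  invFun z := (z.2, z.1 - z.2)
  left_inv z := by simp
  right_inv z := by simp

/-- The cycle `(u,v) ↦ (-(u+v), u)`. -/
def cycE : ((ℤ × ℤ) × (ℤ × ℤ)) ≃ ((ℤ × ℤ) × (ℤ × ℤ)) where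
  toFun z := (-(z.1 + z.2), z.1)
  invFun z := (z.2, -(z.1 + z.2))
  left_inv z := by
    refine Prod.ext (by simp) ?_
    simp only
    abel
  right_inv z := by
    refine Prod.ext ?_ (by simp)
    simp only
    abel

lemma T2_mul_left (ha : L1 a) (hb : L1 b) (hc : L1 c) :
    T2 κ (mulk κ a b) c = T3 κ a b c := by
  rw [T2, T3]
  rw [mulk]
  have step1 : ∀ x : ℤ × ℤ, mulk κ a b x * c (0 - x) * ez (th κ x (0 - x)) =
      ∑' y : ℤ × ℤ, a y * b (x - y) * ez (th κ y (x - y)) * c (0 - x) * ez (th κ x (0 - x)) := by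
    intro x
    rw [mulk, ← tsum_mul_right, ← tsum_mul_right]
  rw [tsum_congr step1]
  have hF : Summable (fun z : (ℤ × ℤ) × (ℤ × ℤ) =>
      a z.2 * b (z.1 - z.2) * ez (th κ z.2 (z.1 - z.2)) * c (0 - z.1) * ez (th κ z.1 (0 - z.1))) := by
    refine (summable_pairg ha hb hc (fun z => z.2) (fun z => z.1 - z.2) (fun z => 0 - z.1)
      (fun z => ez (th κ z.2 (z.1 - z.2)) * ez (th κ z.1 (0 - z.1)))
      (fun z => norm_ez_mul_ez _ _) ?_).congr (fun z => by ring)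
    intro z w h
    simp only [Prod.mk.injEq] at h
    obtain ⟨h1, h2⟩ := h
    rw [h1] at h2
    exact Prod.ext (sub_left_inj.mp h2) h1
  rw [← Summable.tsum_prod' hF (fun x => hF.prod_factor x)]
  rw [← shearE.tsum_eq]
  refine tsum_congr (fun z => ?_)
  obtain ⟨u, v⟩ := z
  show a u * b (u + v - u) * ez (th κ u (u + v - u)) * c (0 - (u + v)) *
      ez (th κ (u + v) (0 - (u + v))) = _
  have e1 : u + v - u = v := by abel
  have e2 : (0 : ℤ × ℤ) - (u + v) = -(u + v) := by abel
  rw [e1, e2, arrange2]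
  congr 2
  simp only [th, Prod.fst_add, Prod.snd_add, Prod.fst_neg, Prod.snd_neg]
  push_cast
  ring



/-- The cycle `(u,v) ↦ (v, -(u+v))`. -/
def cycE' : ((ℤ × ℤ) × (ℤ × ℤ)) ≃ ((ℤ × ℤ) × (ℤ × ℤ)) where
  toFun z := (z.2, -(z.1 + z.2))
  invFun z := (-(z.1 + z.2), z.1)
  left_inv z := by
    refine Prod.ext ?_ (by simp)
    simp only
    abel
  right_inv z := by
    refine Prod.ext (by simp) ?_
    simp only
    abel

lemma T3_cyc : T3 κ a b c = T3 κ c a b := by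
  rw [T3, T3, ← cycE'.tsum_eq]
  refine tsum_congr (fun z => ?_)
  obtain ⟨x, y⟩ := z
  simp only [cycE', Equiv.coe_fn_mk]
  have e1 : -(y + -(x + y)) = x := by abel
  rw [e1]
  have e2 : th κ y (-(x + y)) + th κ y x + th κ (-(x + y)) x =
      th κ x y + th κ x (-(x + y)) + th κ y (-(x + y)) := by
    simp only [th, Prod.fst_add, Prod.snd_add, Prod.fst_neg, Prod.snd_neg]
    push_cast
    ring
  rw [e2]
  ring

lemma mulk_assoc (ha : L1 a) (hb : L1 b) (hc : L1 c) (x : ℤ × ℤ) :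
    mulk κ (mulk κ a b) c x = mulk κ a (mulk κ b c) x := by
  have hR : mulk κ a (mulk κ b c) x = ∑' w : (ℤ × ℤ) × (ℤ × ℤ),
      a w.1 * b w.2 * c (x - w.1 - w.2) *
        ez (th κ w.1 w.2 + th κ w.1 (x - w.1 - w.2) + th κ w.2 (x - w.1 - w.2)) := by
    rw [mulk]
    have step1 : ∀ u : ℤ × ℤ, a u * mulk κ b c (x - u) * ez (th κ u (x - u)) =
        ∑' v : ℤ × ℤ, a u * (b v * c (x - u - v) * ez (th κ v (x - u - v))) * ez (th κ u (x - u)) := by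
      intro u
      rw [mulk, ← tsum_mul_left, ← tsum_mul_right]
    rw [tsum_congr step1]
    have hF : Summable (fun w : (ℤ × ℤ) × (ℤ × ℤ) =>
        a w.1 * (b w.2 * c (x - w.1 - w.2) * ez (th κ w.2 (x - w.1 - w.2))) * ez (th κ w.1 (x - w.1))) := by
      refine (summable_pairg ha hb hc (fun w => w.1) (fun w => w.2) (fun w => x - w.1 - w.2)
        (fun w => ez (th κ w.2 (x - w.1 - w.2)) * ez (th κ w.1 (x - w.1)))
        (fun w => norm_ez_mul_ez _ _) (fun w z h => h)).congr (fun w => by ring)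
    rw [← Summable.tsum_prod' hF (fun u => hF.prod_factor u)]
    refine tsum_congr (fun w => ?_)
    obtain ⟨u, v⟩ := w
    show a u * (b v * c (x - u - v) * ez (th κ v (x - u - v))) * ez (th κ u (x - u)) = _
    rw [mul_ez_arrange]
    congr 2
    simp only [th, Prod.fst_sub, Prod.snd_sub, Prod.fst_add, Prod.snd_add]
    push_cast
    ring
  rw [hR, mulk]
  have step1 : ∀ y : ℤ × ℤ, mulk κ a b y * c (x - y) * ez (th κ y (x - y)) =
      ∑' z : ℤ × ℤ, a z * b (y - z) * ez (th κ z (y - z)) * c (x - y) * ez (th κ y (x - y)) := by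
    intro y
    rw [mulk, ← tsum_mul_right, ← tsum_mul_right]
  rw [tsum_congr step1]
  have hF : Summable (fun w : (ℤ × ℤ) × (ℤ × ℤ) =>
      a w.2 * b (w.1 - w.2) * ez (th κ w.2 (w.1 - w.2)) * c (x - w.1) * ez (th κ w.1 (x - w.1))) := by
    refine (summable_pairg ha hb hc (fun w => w.2) (fun w => w.1 - w.2) (fun w => x - w.1)
      (fun w => ez (th κ w.2 (w.1 - w.2)) * ez (th κ w.1 (x - w.1)))
      (fun w => norm_ez_mul_ez _ _) ?_).congr (fun w => by ring)
    intro z w h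
    simp only [Prod.mk.injEq] at h
    obtain ⟨h1, h2⟩ := h
    rw [h1] at h2
    exact Prod.ext (sub_left_inj.mp h2) h1
  rw [← Summable.tsum_prod' hF (fun y => hF.prod_factor y), ← shearE.tsum_eq]
  refine tsum_congr (fun w => ?_)
  obtain ⟨u, v⟩ := w
  simp only [shearE, Equiv.coe_fn_mk]
  have e1 : u + v - u = v := by abel
  have e2 : x - (u + v) = x - u - v := by abel
  rw [e1, e2, arrange2]
  congr 2
  simp only [th, Prod.fst_sub, Prod.snd_sub, Prod.fst_add, Prod.snd_add]
  push_cast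
  ring



lemma conj_tsum' (f : ℤ × ℤ → ℂ) :
    (starRingEnd ℂ) (∑' y, f y) = ∑' y, (starRingEnd ℂ) (f y) := by
  rw [← Complex.star_def]
  exact tsum_star

lemma stk_mulk (ha : L1 a) (hb : L1 b) (x : ℤ × ℤ) :
    stk κ (mulk κ a b) x = mulk κ (stk κ b) (stk κ a) x := by
  rw [stk, mulk, conj_tsum', ← tsum_mul_left]
  rw [mulk, ← (Equiv.addLeft x).tsum_eq
    (fun z => stk κ b z * stk κ a (x - z) * ez (th κ z (x - z)))]
  refine tsum_congr (fun y => ?_)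
  show ez (th κ x x) * (starRingEnd ℂ) (a y * b (-x - y) * ez (th κ y (-x - y))) =
    stk κ b (x + y) * stk κ a (x - (x + y)) * ez (th κ (x + y) (x - (x + y)))
  rw [map_mul, map_mul, conj_ez, stk, stk]
  have e1 : x - (x + y) = -y := by abel
  rw [e1]
  have e2 : -(x + y) = -x - y := by abel
  rw [e2]
  have e3 : - -y = y := by abel
  rw [e3]
  have e4 : th κ (x + y) (x + y) + (th κ (-y) (-y) + th κ (x + y) (-y)) =
      th κ x x + - th κ y (-x - y) := by
    simp only [th, Prod.fst_add, Prod.snd_add, Prod.fst_neg, Prod.snd_neg, Prod.fst_sub,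
      Prod.snd_sub]
    push_cast
    ring
  calc ez (th κ x x) * ((starRingEnd ℂ) (a y) * (starRingEnd ℂ) (b (-x - y)) * ez (-th κ y (-x - y)))
      = (starRingEnd ℂ) (b (-x - y)) * (starRingEnd ℂ) (a y) *
        (ez (th κ x x) * ez (-th κ y (-x - y))) := by ring
    _ = _ := by
        rw [ez_mul_ez, ← e4, ← ez_mul_ez, ← ez_mul_ez]
        ring

lemma T2_stk_self (ha : L1 a) : T2 κ (stk κ a) a = (((∑' x : ℤ × ℤ, ‖a x‖ ^ 2) : ℝ) : ℂ) := by
  rw [T2, mulk]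
  have step : ∀ x : ℤ × ℤ, stk κ a x * a (0 - x) * ez (th κ x (0 - x)) =
      ((‖a (-x)‖ ^ 2 : ℝ) : ℂ) := by
    intro x
    have e1 : (0 : ℤ × ℤ) - x = -x := by abel
    rw [e1, stk]
    have e2 : th κ x x + th κ x (-x) = 0 := by
      simp only [th, Prod.fst_neg, Prod.snd_neg]
      push_cast
      ring
    calc ez (th κ x x) * (starRingEnd ℂ) (a (-x)) * a (-x) * ez (th κ x (-x))
        = (starRingEnd ℂ) (a (-x)) * a (-x) * (ez (th κ x x) * ez (th κ x (-x))) := by ring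
      _ = (starRingEnd ℂ) (a (-x)) * a (-x) := by rw [ez_mul_ez, e2, ez_zero, mul_one]
      _ = ((‖a (-x)‖ ^ 2 : ℝ) : ℂ) := by
          rw [mul_comm, Complex.mul_conj, Complex.normSq_eq_norm_sq]
  rw [tsum_congr step]
  rw [show (∑' (x : ℤ × ℤ), ((‖a (-x)‖ ^ 2 : ℝ) : ℂ)) = ∑' (x : ℤ × ℤ), ((‖a x‖ ^ 2 : ℝ) : ℂ) from
    (Equiv.neg (ℤ × ℤ)).tsum_eq (fun x => ((‖a x‖ ^ 2 : ℝ) : ℂ))]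
  exact (Complex.ofReal_tsum _).symm

lemma summable_sq (ha : L1 a) : Summable (fun x => ‖a x‖ ^ 2) := by
  apply Summable.of_nonneg_of_le (fun x => sq_nonneg _) _ (ha.mul_right (∑' y, ‖a y‖))
  intro x
  rw [sq]
  exact mul_le_mul_of_nonneg_left (ha.bound x) (norm_nonneg _)

lemma mulk_smul_left (t : ℂ) (x : ℤ × ℤ) :
    mulk κ (fun y => t * a y) b x = t * mulk κ a b x := by
  rw [mulk, mulk, ← tsum_mul_left]
  exact tsum_congr (fun y => by ring)

lemma T3_smul1 (t : ℂ) : T3 κ (fun x => t * a x) b c = t * T3 κ a b c := by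
  rw [T3, T3, ← tsum_mul_left]
  exact tsum_congr (fun z => by ring)

lemma T3_smul2 (t : ℂ) : T3 κ a (fun x => t * b x) c = t * T3 κ a b c := by
  rw [T3, T3, ← tsum_mul_left]
  exact tsum_congr (fun z => by ring)

lemma summable_T3 (ha : L1 a) (hb : L1 b) (hc : L1 c) :
    Summable (fun z : (ℤ × ℤ) × (ℤ × ℤ) => a z.1 * b z.2 * c (-(z.1 + z.2)) *
      ez (th κ z.1 z.2 + th κ z.1 (-(z.1 + z.2)) + th κ z.2 (-(z.1 + z.2)))) :=
  summable_pairg ha hb hc (fun z => z.1) (fun z => z.2) (fun z => -(z.1 + z.2))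
    (fun z => ez _) (fun z => norm_ez _) (fun z w h => h)

lemma T3_add1 (ha : L1 a) (ha' : L1 a') (hb : L1 b) (hc : L1 c) :
    T3 κ (fun x => a x + a' x) b c = T3 κ a b c + T3 κ a' b c := by
  rw [T3, T3, T3, ← Summable.tsum_add (summable_T3 ha hb hc) (summable_T3 ha' hb hc)]
  exact tsum_congr (fun z => by ring)

lemma T3_add2 (ha : L1 a) (hb : L1 b) (hb' : L1 b') (hc : L1 c) :
    T3 κ a (fun x => b x + b' x) c = T3 κ a b c + T3 κ a b' c := by
  rw [T3, T3, T3, ← Summable.tsum_add (summable_T3 ha hb hc) (summable_T3 ha hb' hc)]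
  exact tsum_congr (fun z => by ring)

lemma T2_sub_right (ha : L1 a) (hb : L1 b) (hb' : L1 b') :
    T2 κ a (fun y => b y - b' y) = T2 κ a b - T2 κ a b' := by
  rw [T2, T2, T2, mulk, mulk, mulk,
    ← Summable.tsum_sub (summable_term ha hb 0) (summable_term ha hb' 0)]
  exact tsum_congr (fun y => by ring)

lemma l1_add (ha : L1 a) (hb : L1 b) : L1 (fun x => a x + b x) := by
  apply Summable.of_nonneg_of_le (fun x => norm_nonneg _) (fun x => norm_add_le _ _)
  exact ha.add hb

lemma l1_smul (t : ℂ) (ha : L1 a) : L1 (fun x => t * a x) := by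
  have : (fun x => ‖t * a x‖) = fun x => ‖t‖ * ‖a x‖ := by
    funext x; rw [norm_mul]
  rw [L1, this]
  exact ha.mul_left _


lemma T2_add_right (ha : L1 a) (hb : L1 b) (hb' : L1 b') :
    T2 κ a (fun y => b y + b' y) = T2 κ a b + T2 κ a b' := by
  rw [T2, T2, T2, mulk, mulk, mulk,
    ← Summable.tsum_add (summable_term ha hb 0) (summable_term ha hb' 0)]
  exact tsum_congr (fun y => by ring)

lemma mulk_smul_right (t : ℂ) (x : ℤ × ℤ) :
    mulk κ a (fun y => t * b y) x = t * mulk κ a b x := by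
  rw [mulk, mulk, ← tsum_mul_left]
  exact tsum_congr (fun y => by ring)

lemma mulk_D1 (ha : L1 a) (hb : L1 b) (hDa : L1 (fun y => (y.1 : ℂ) * a y))
    (hDb : L1 (fun y => (y.1 : ℂ) * b y)) (x : ℤ × ℤ) :
    (x.1 : ℂ) * mulk κ a b x =
      mulk κ (fun y => (y.1 : ℂ) * a y) b x + mulk κ a (fun y => (y.1 : ℂ) * b y) x := by
  rw [mulk, mulk, mulk, ← tsum_mul_left,
    ← Summable.tsum_add (summable_term hDa hb x) (summable_term ha hDb x)]
  refine tsum_congr (fun y => ?_)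
  have e1 : (x.1 : ℂ) = (y.1 : ℂ) + ((x - y).1 : ℂ) := by
    rw [Prod.fst_sub]; push_cast; ring
  rw [e1]
  ring

lemma mulk_D2 (ha : L1 a) (hb : L1 b) (hDa : L1 (fun y => (y.2 : ℂ) * a y))
    (hDb : L1 (fun y => (y.2 : ℂ) * b y)) (x : ℤ × ℤ) :
    (x.2 : ℂ) * mulk κ a b x =
      mulk κ (fun y => (y.2 : ℂ) * a y) b x + mulk κ a (fun y => (y.2 : ℂ) * b y) x := by
  rw [mulk, mulk, mulk, ← tsum_mul_left,
    ← Summable.tsum_add (summable_term hDa hb x) (summable_term ha hDb x)]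
  refine tsum_congr (fun y => ?_)
  have e1 : (x.2 : ℂ) = (y.2 : ℂ) + ((x - y).2 : ℂ) := by
    rw [Prod.snd_sub]; push_cast; ring
  rw [e1]
  ring

/-- Key positivity step: for a self-adjoint idempotent `p` and self-adjoint `d1, d2`
satisfying the Leibniz identities, the quantity `(T2 d1 d1 + T2 d2 d2)/2 + ε K` is a
nonnegative real for `ε = ±I`. -/
lemma key_eps {p d1 d2 : ℤ × ℤ → ℂ} (hp : L1 p) (hd1 : L1 d1) (hd2 : L1 d2)
    (hpp : ∀ x, mulk κ p p x = p x) (hstp : ∀ x, stk κ p x = p x)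
    (hs1 : ∀ x, stk κ d1 x = d1 x) (hs2 : ∀ x, stk κ d2 x = d2 x)
    (hL1 : ∀ x, mulk κ d1 p x + mulk κ p d1 x = d1 x)
    (hL2 : ∀ x, mulk κ d2 p x + mulk κ p d2 x = d2 x)
    (ε : ℂ) (hcε : (starRingEnd ℂ) ε = -ε) (hε2 : ε * ε = -1) :
    ∃ S : ℝ, 0 ≤ S ∧
      (S : ℂ) = (T2 κ d1 d1 + T2 κ d2 d2) / 2 +
        ε * (T3 κ d1 d2 p - T3 κ d2 d1 p) := by
  classical
  set d : ℤ × ℤ → ℂ := fun x => d1 x + ε * d2 x with hd_def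
  set dd : ℤ × ℤ → ℂ := fun x => d1 x + (-ε) * d2 x with hdd_def
  have hd : L1 d := l1_add hd1 (l1_smul ε hd2)
  have hdd : L1 dd := l1_add hd1 (l1_smul (-ε) hd2)
  set A : ℤ × ℤ → ℂ := mulk κ d p with hA_def
  have hA : L1 A := l1_mulk hd hp
  refine ⟨∑' x : ℤ × ℤ, ‖A x‖ ^ 2, tsum_nonneg (fun x => sq_nonneg _), ?_⟩
  -- step 1 : the sum of squares is `T2 (stk A) A`
  have h1 : ((∑' x : ℤ × ℤ, ‖A x‖ ^ 2 : ℝ) : ℂ) = T2 κ (stk κ A) A := (T2_stk_self hA).symm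
  -- step 2 : `stk A = mulk p dd`
  have hstd : stk κ d = dd := by
    funext x
    show stk κ d x = d1 x + (-ε) * d2 x
    rw [← hs1 x, ← hs2 x]
    simp only [stk, hd_def]
    rw [map_add, map_mul, hcε]
    ring
  have h2 : stk κ A = mulk κ p dd := by
    funext x
    rw [hA_def, stk_mulk hd hp x, show stk κ p = p from funext hstp, hstd]
  -- step 3 : reduce to `T3 dd d p`
  have h3 : T2 κ (mulk κ p dd) A = T3 κ p dd A := T2_mul_left hp hdd hA
  have h4 : T3 κ p dd A = T3 κ A p dd := T3_cyc
  have h6 : mulk κ A p = A := by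
    funext x
    rw [hA_def, mulk_assoc hd hp hp x, show mulk κ p p = p from funext hpp]
  have h5 : T3 κ A p dd = T3 κ d p dd := by
    rw [← T2_mul_left hA hp hdd, h6, hA_def, T2_mul_left hd hp hdd]
  have h8 : T3 κ d p dd = T3 κ dd d p := T3_cyc
  -- step 4 : expand bilinearly
  have hsε2 : L1 (fun x => ε * d2 x) := l1_smul ε hd2
  have hsε2' : L1 (fun x => (-ε) * d2 x) := l1_smul (-ε) hd2
  have h9 : T3 κ dd d p = T3 κ d1 d p + (-ε) * T3 κ d2 d p := by
    rw [hdd_def, T3_add1 hd1 hsε2' hd hp, T3_smul1]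
  have h10 : T3 κ d1 d p = T3 κ d1 d1 p + ε * T3 κ d1 d2 p := by
    rw [hd_def, T3_add2 hd1 hd1 hsε2 hp, T3_smul2]
  have h11 : T3 κ d2 d p = T3 κ d2 d1 p + ε * T3 κ d2 d2 p := by
    rw [hd_def, T3_add2 hd2 hd1 hsε2 hp, T3_smul2]
  -- step 5 : the diagonal terms are halves of the `T2`s
  have h12 : T2 κ d1 d1 = 2 * T3 κ d1 d1 p := by
    have e1 : T2 κ d1 (fun x => mulk κ d1 p x + mulk κ p d1 x) = T2 κ d1 d1 :=
      congrArg (T2 κ d1) (funext hL1)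
    rw [← e1, T2_add_right hd1 (l1_mulk hd1 hp) (l1_mulk hp hd1),
      T2_mul_right hd1 hd1 hp, T2_mul_right hd1 hp hd1,
      show T3 κ d1 p d1 = T3 κ d1 d1 p from T3_cyc]
    ring
  have h13 : T2 κ d2 d2 = 2 * T3 κ d2 d2 p := by
    have e1 : T2 κ d2 (fun x => mulk κ d2 p x + mulk κ p d2 x) = T2 κ d2 d2 :=
      congrArg (T2 κ d2) (funext hL2)
    rw [← e1, T2_add_right hd2 (l1_mulk hd2 hp) (l1_mulk hp hd2),
      T2_mul_right hd2 hd2 hp, T2_mul_right hd2 hp hd2,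
      show T3 κ d2 p d2 = T3 κ d2 d2 p from T3_cyc]
    ring
  rw [h1, h2, h3, h4, h5, h8, h9, h10, h11, h12, h13]
  linear_combination (-(T3 κ d2 d2 p)) * hε2

end Core

end St10

namespace St10

section Inst
variable (q : ℕ) (α β : ℝ) (r s : ℕ)

/-- The combined twist parameter. -/
def κq (q : ℕ) (α β : ℝ) (r s : ℕ) : ℝ := α * β + (r : ℝ) * s / q

lemma twFac_eq (x y : ℤ × ℤ) : twFac q α β r s x y = ez (th (κq q α β r s) x y) := by
  rw [twFac, ez, th, κq]
  congr 1
  push_cast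
  ring

lemma twConv_eq (a b : ℤ × ℤ → ℂ) (nm : ℤ × ℤ) :
    twConv q α β r s a b nm = mulk (κq q α β r s) a b nm := by
  rw [twConv, mulk]
  exact tsum_congr fun y => by rw [twFac_eq]

end Inst

end St10

end

/-- for a projection `p` in the weighted twisted convolution algebra
`ℓ¹₁(Λ×Γ)`, the energy `E(p)` is a nonnegative real number bounded below by the absolute
value of the Connes–Chern number `c₁(p)`. -/
theorem statement10 (q : ℕ) [NeZero q] (α β : ℝ) (hα : α ≠ 0) (hβ : β ≠ 0)
    (r s : ℕ) (hr : r < q) (hs : s < q) (hrq : Nat.Coprime r q) (hsq : Nat.Coprime s q)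
    (p : ℤ × ℤ → ℂ)
    (hp1 : Summable (fun nm : ℤ × ℤ =>
      ‖p nm‖ * (1 + |α * nm.1| + |β * nm.2|)))
    (hidem : ∀ nm : ℤ × ℤ, twConv q α β r s p p nm = p nm)
    (hsa : ∀ nm : ℤ × ℤ, twFac q α β r s nm nm * (starRingEnd ℂ) (p (-nm)) = p nm)
    (Ep c1p : ℂ)
    (hEp : Ep = (4 * (Real.pi : ℂ) * ((|α * β| : ℝ) : ℂ))⁻¹ *
      (twConv q α β r s (td1 α p) (td1 α p) (0, 0) +
        twConv q α β r s (td2 β p) (td2 β p) (0, 0)))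
    (hc1p : c1p = (2 * (Real.pi : ℂ) * Complex.I * ((|α * β| : ℝ) : ℂ))⁻¹ *
      twConv q α β r s p
        (fun y => twConv q α β r s (td1 α p) (td2 β p) y -
          twConv q α β r s (td2 β p) (td1 α p) y) (0, 0)) :
    Ep.im = 0 ∧ 0 ≤ Ep.re ∧ (‖c1p‖ : ℝ) ≤ Ep.re := by
  classical
  have hπ : (0:ℝ) < Real.pi := Real.pi_pos
  have hαβ : (0:ℝ) < |α * β| := abs_pos.mpr (mul_ne_zero hα hβ)
  set κ : ℝ := St10.κq q α β r s with hκ_def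
  set d1 : ℤ × ℤ → ℂ := td1 α p with hd1_def
  set d2 : ℤ × ℤ → ℂ := td2 β p with hd2_def
  -- ℓ¹ facts
  have hw1 : ∀ nm : ℤ × ℤ, (1:ℝ) ≤ 1 + |α * nm.1| + |β * nm.2| := by
    intro nm
    have h1 := abs_nonneg (α * nm.1)
    have h2 := abs_nonneg (β * nm.2)
    linarith
  have hpL1 : St10.L1 p := by
    refine Summable.of_nonneg_of_le (fun _ => norm_nonneg _) (fun nm => ?_) hp1
    calc ‖p nm‖ = ‖p nm‖ * 1 := (mul_one _).symm
      _ ≤ ‖p nm‖ * (1 + |α * nm.1| + |β * nm.2|) :=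
          mul_le_mul_of_nonneg_left (hw1 nm) (norm_nonneg _)
  have hd1n : ∀ nm : ℤ × ℤ, ‖d1 nm‖ = 2 * Real.pi * |α * nm.1| * ‖p nm‖ := by
    intro nm
    rw [hd1_def, td1]
    rw [norm_mul, norm_mul, norm_mul, norm_mul, Complex.norm_two, Complex.norm_I, Complex.norm_real,
      Complex.norm_real, Real.norm_eq_abs, Real.norm_eq_abs, abs_of_pos hπ, mul_one]
  have hd2n : ∀ nm : ℤ × ℤ, ‖d2 nm‖ = 2 * Real.pi * |β * nm.2| * ‖p nm‖ := by
    intro nm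
    rw [hd2_def, td2]
    rw [norm_mul, norm_mul, norm_mul, norm_mul, Complex.norm_two, Complex.norm_I, Complex.norm_real,
      Complex.norm_real, Real.norm_eq_abs, Real.norm_eq_abs, abs_of_pos hπ, mul_one]
  have hd1L1 : St10.L1 d1 := by
    refine Summable.of_nonneg_of_le (fun _ => norm_nonneg _) (fun nm => ?_)
      (hp1.mul_left (2 * Real.pi))
    rw [hd1n nm]
    calc 2 * Real.pi * |α * nm.1| * ‖p nm‖ = 2 * Real.pi * (|α * nm.1| * ‖p nm‖) := by ring
      _ ≤ 2 * Real.pi * (‖p nm‖ * (1 + |α * nm.1| + |β * nm.2|)) := by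
          refine mul_le_mul_of_nonneg_left ?_ (by positivity)
          rw [mul_comm]
          refine mul_le_mul_of_nonneg_left ?_ (norm_nonneg _)
          have := abs_nonneg (β * nm.2)
          linarith
  have hd2L1 : St10.L1 d2 := by
    refine Summable.of_nonneg_of_le (fun _ => norm_nonneg _) (fun nm => ?_)
      (hp1.mul_left (2 * Real.pi))
    rw [hd2n nm]
    calc 2 * Real.pi * |β * nm.2| * ‖p nm‖ = 2 * Real.pi * (|β * nm.2| * ‖p nm‖) := by ring
      _ ≤ 2 * Real.pi * (‖p nm‖ * (1 + |α * nm.1| + |β * nm.2|)) := by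
          refine mul_le_mul_of_nonneg_left ?_ (by positivity)
          rw [mul_comm]
          refine mul_le_mul_of_nonneg_left ?_ (norm_nonneg _)
          have := abs_nonneg (α * nm.1)
          linarith
  have hD1L1 : St10.L1 (fun y : ℤ × ℤ => (y.1 : ℂ) * p y) := by
    refine Summable.of_nonneg_of_le (fun _ => norm_nonneg _) (fun nm => ?_)
      (hp1.mul_left (|α|⁻¹))
    have hn : ‖(nm.1 : ℂ) * p nm‖ = |(nm.1 : ℝ)| * ‖p nm‖ := by
      rw [norm_mul]
      congr 1
      rw [show ((nm.1 : ℂ)) = (((nm.1 : ℝ)) : ℂ) by push_cast; ring, Complex.norm_real,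
        Real.norm_eq_abs]
    rw [hn]
    have hα' : (0:ℝ) < |α| := abs_pos.mpr hα
    have h1 : |α| * |(nm.1 : ℝ)| ≤ 1 + |α * nm.1| + |β * nm.2| := by
      rw [← abs_mul]
      have := abs_nonneg (β * nm.2)
      linarith
    have h2 : |(nm.1 : ℝ)| ≤ |α|⁻¹ * (1 + |α * nm.1| + |β * nm.2|) := by
      rw [show |(nm.1 : ℝ)| = |α|⁻¹ * (|α| * |(nm.1 : ℝ)|) by field_simp]
      exact mul_le_mul_of_nonneg_left h1 (by positivity)
    calc |(nm.1 : ℝ)| * ‖p nm‖ ≤ |α|⁻¹ * (1 + |α * nm.1| + |β * nm.2|) * ‖p nm‖ :=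
          mul_le_mul_of_nonneg_right h2 (norm_nonneg _)
      _ = |α|⁻¹ * (‖p nm‖ * (1 + |α * nm.1| + |β * nm.2|)) := by
          ring
  have hD2L1 : St10.L1 (fun y : ℤ × ℤ => (y.2 : ℂ) * p y) := by
    refine Summable.of_nonneg_of_le (fun _ => norm_nonneg _) (fun nm => ?_)
      (hp1.mul_left (|β|⁻¹))
    have hn : ‖(nm.2 : ℂ) * p nm‖ = |(nm.2 : ℝ)| * ‖p nm‖ := by
      rw [norm_mul]
      congr 1
      rw [show ((nm.2 : ℂ)) = (((nm.2 : ℝ)) : ℂ) by push_cast; ring, Complex.norm_real,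
        Real.norm_eq_abs]
    rw [hn]
    have hβ' : (0:ℝ) < |β| := abs_pos.mpr hβ
    have h1 : |β| * |(nm.2 : ℝ)| ≤ 1 + |α * nm.1| + |β * nm.2| := by
      rw [← abs_mul]
      have := abs_nonneg (α * nm.1)
      linarith
    have h2 : |(nm.2 : ℝ)| ≤ |β|⁻¹ * (1 + |α * nm.1| + |β * nm.2|) := by
      rw [show |(nm.2 : ℝ)| = |β|⁻¹ * (|β| * |(nm.2 : ℝ)|) by field_simp]
      exact mul_le_mul_of_nonneg_left h1 (by positivity)
    calc |(nm.2 : ℝ)| * ‖p nm‖ ≤ |β|⁻¹ * (1 + |α * nm.1| + |β * nm.2|) * ‖p nm‖ :=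
          mul_le_mul_of_nonneg_right h2 (norm_nonneg _)
      _ = |β|⁻¹ * (‖p nm‖ * (1 + |α * nm.1| + |β * nm.2|)) := by
          ring
  -- algebraic structure
  have hpp : ∀ x : ℤ × ℤ, St10.mulk κ p p x = p x := fun x =>
    (St10.twConv_eq q α β r s p p x).symm.trans (hidem x)
  have hstp : ∀ x : ℤ × ℤ, St10.stk κ p x = p x := by
    intro x
    rw [St10.stk, ← St10.twFac_eq]
    exact hsa x
  have hs1 : ∀ x : ℤ × ℤ, St10.stk κ d1 x = d1 x := by
    intro x
    show St10.ez (St10.th κ x x) * (starRingEnd ℂ) (d1 (-x)) = d1 x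
    rw [hd1_def]
    simp only [td1, map_mul, Complex.conj_I, Complex.conj_ofReal, map_ofNat]
    rw [← hstp x, St10.stk]
    push_cast [Prod.fst_neg]
    ring
  have hs2 : ∀ x : ℤ × ℤ, St10.stk κ d2 x = d2 x := by
    intro x
    show St10.ez (St10.th κ x x) * (starRingEnd ℂ) (d2 (-x)) = d2 x
    rw [hd2_def]
    simp only [td2, map_mul, Complex.conj_I, Complex.conj_ofReal, map_ofNat]
    rw [← hstp x, St10.stk]
    push_cast [Prod.snd_neg]
    ring
  have hrew1 : d1 = fun y : ℤ × ℤ =>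
      (2 * (Real.pi : ℂ) * Complex.I * (α : ℂ)) * ((y.1 : ℂ) * p y) := by
    funext y
    rw [hd1_def, td1]
    push_cast
    ring
  have hrew2 : d2 = fun y : ℤ × ℤ =>
      (2 * (Real.pi : ℂ) * Complex.I * (β : ℂ)) * ((y.2 : ℂ) * p y) := by
    funext y
    rw [hd2_def, td2]
    push_cast
    ring
  have hL1 : ∀ x : ℤ × ℤ, St10.mulk κ d1 p x + St10.mulk κ p d1 x = d1 x := by
    intro x
    rw [hrew1, St10.mulk_smul_left, St10.mulk_smul_right, ← mul_add,
      ← St10.mulk_D1 hpL1 hpL1 hD1L1 hD1L1 x, hpp x]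
  have hL2 : ∀ x : ℤ × ℤ, St10.mulk κ d2 p x + St10.mulk κ p d2 x = d2 x := by
    intro x
    rw [hrew2, St10.mulk_smul_left, St10.mulk_smul_right, ← mul_add,
      ← St10.mulk_D2 hpL1 hpL1 hD2L1 hD2L1 x, hpp x]
  -- key positivity
  obtain ⟨S1, hS1n, hS1⟩ := St10.key_eps hpL1 hd1L1 hd2L1 hpp hstp hs1 hs2 hL1 hL2
    Complex.I (by rw [Complex.conj_I]) Complex.I_mul_I
  obtain ⟨S2, hS2n, hS2⟩ := St10.key_eps hpL1 hd1L1 hd2L1 hpp hstp hs1 hs2 hL1 hL2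
    (-Complex.I) (by rw [map_neg, Complex.conj_I, neg_neg])
    (by rw [neg_mul_neg, Complex.I_mul_I])
  -- the energies are sums of squares
  set t1 : ℝ := ∑' x : ℤ × ℤ, ‖d1 x‖ ^ 2 with ht1_def
  set t2 : ℝ := ∑' x : ℤ × ℤ, ‖d2 x‖ ^ 2 with ht2_def
  have ht1n : (0:ℝ) ≤ t1 := tsum_nonneg (fun x => sq_nonneg _)
  have ht2n : (0:ℝ) ≤ t2 := tsum_nonneg (fun x => sq_nonneg _)
  have ht1 : St10.T2 κ d1 d1 = ((t1 : ℝ) : ℂ) := by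
    have h := St10.T2_stk_self (κ := κ) hd1L1
    rw [show St10.stk κ d1 = d1 from funext hs1] at h
    exact h
  have ht2 : St10.T2 κ d2 d2 = ((t2 : ℝ) : ℂ) := by
    have h := St10.T2_stk_self (κ := κ) hd2L1
    rw [show St10.stk κ d2 = d2 from funext hs2] at h
    exact h
  set K : ℂ := St10.T3 κ d1 d2 p - St10.T3 κ d2 d1 p with hK_def
  rw [ht1, ht2] at hS1 hS2
  have hsum : S1 + S2 = t1 + t2 := by
    have h : ((S1 + S2 : ℝ) : ℂ) = ((t1 + t2 : ℝ) : ℂ) := by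
      push_cast
      linear_combination hS1 + hS2
    exact_mod_cast h
  have hIK : Complex.I * K = ((S1 - (t1 + t2) / 2 : ℝ) : ℂ) := by
    push_cast
    linear_combination -hS1
  have habsK : ‖K‖ ≤ (t1 + t2) / 2 := by
    have h1 : ‖K‖ = |S1 - (t1 + t2) / 2| := by
      rw [← one_mul ‖K‖, ← Complex.norm_I, ← norm_mul, hIK, Complex.norm_real, Real.norm_eq_abs]
    rw [h1, abs_le]
    constructor <;> linarith
  -- identify Ep
  have hconst : (4 * (Real.pi : ℂ) * ((|α * β| : ℝ) : ℂ))⁻¹ =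
      (((4 * Real.pi * |α * β|)⁻¹ : ℝ) : ℂ) := by
    rw [Complex.ofReal_inv]
    congr 1
    push_cast
    ring
  have hEp2 : Ep = (((4 * Real.pi * |α * β|)⁻¹ * (t1 + t2) : ℝ) : ℂ) := by
    rw [hEp, St10.twConv_eq, St10.twConv_eq]
    rw [show St10.mulk κ d1 d1 (0, 0) = ((t1 : ℝ) : ℂ) from ht1,
      show St10.mulk κ d2 d2 (0, 0) = ((t2 : ℝ) : ℂ) from ht2, hconst]
    push_cast
    ring
  have hEpre : Ep.re = (4 * Real.pi * |α * β|)⁻¹ * (t1 + t2) := by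
    rw [hEp2, Complex.ofReal_re]
  refine ⟨by rw [hEp2, Complex.ofReal_im], by rw [hEpre]; positivity, ?_⟩
  -- identify c1p
  have hc1p2 : c1p = (2 * (Real.pi : ℂ) * Complex.I * ((|α * β| : ℝ) : ℂ))⁻¹ * K := by
    rw [hc1p]
    congr 1
    rw [show (fun y => twConv q α β r s d1 d2 y - twConv q α β r s d2 d1 y) =
        (fun y => St10.mulk κ d1 d2 y - St10.mulk κ d2 d1 y) from
      funext fun y => by rw [St10.twConv_eq, St10.twConv_eq]]
    rw [St10.twConv_eq]
    have h : St10.T2 κ p (fun y => St10.mulk κ d1 d2 y - St10.mulk κ d2 d1 y) = K := by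
      rw [St10.T2_sub_right hpL1 (St10.l1_mulk hd1L1 hd2L1) (St10.l1_mulk hd2L1 hd1L1),
        St10.T2_mul_right hpL1 hd1L1 hd2L1, St10.T2_mul_right hpL1 hd2L1 hd1L1, hK_def,
        show St10.T3 κ p d1 d2 = St10.T3 κ d1 d2 p from St10.T3_cyc.symm,
        show St10.T3 κ p d2 d1 = St10.T3 κ d2 d1 p from St10.T3_cyc.symm]
    exact h
  have habsc : ‖2 * (Real.pi : ℂ) * Complex.I * ((|α * β| : ℝ) : ℂ)‖ =
      2 * Real.pi * |α * β| := by
    rw [norm_mul, norm_mul, norm_mul, Complex.norm_two, Complex.norm_I, Complex.norm_real,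
      Complex.norm_real, Real.norm_eq_abs, Real.norm_eq_abs, abs_abs, abs_of_pos hπ, mul_one]
  rw [hc1p2, norm_mul, norm_inv, habsc, hEpre]
  calc (2 * Real.pi * |α * β|)⁻¹ * ‖K‖
      ≤ (2 * Real.pi * |α * β|)⁻¹ * ((t1 + t2) / 2) :=
        mul_le_mul_of_nonneg_left habsK (by positivity)
    _ = (4 * Real.pi * |α * β|)⁻¹ * (t1 + t2) := by
        rw [show (4 * Real.pi * |α * β|) = 2 * Real.pi * |α * β| * 2 by ring, mul_inv]
        ring

end
end
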